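/- Let the activation function g and the loss ℒ (in its second argument) be differentiable, and let θ satisfy ∇_θ R_emp(θ) = 0. Let R = {r_1,…,r_t} ⊆ {1,…,L−1} and Γ = {K_{r_1},…,K_{r_t}}, and define θ_0 = θ, θ_i = ξ^{(i)}(θ_{i−1}; r_i, K_{r_i}) for i = 1,…,t, where each ξ^{(i)} is either a β embedding with zero outgoing weights (β_{ζ0}) or a γ embedding γ_λ (with coefficients summing to one). Then θ_t is a stationary point of the empirical risk of the enlarged network: ∇ R̂_emp(θ_t) = 0. -/

import Mathlib

/-- Parameters of a fully connected feedforward network: `w ℓ j i` is the weight from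
unit `i` of layer `ℓ-1` to unit `j` of layer `ℓ`, and `b ℓ j` is the bias of unit `j`
of layer `ℓ`.  Layers are numbered `1, …, L` (layer `0` is the input); units within a
layer are numbered from `0`, so layer `ℓ` consists of the units `0, …, H ℓ - 1`. -/
structure NNParams where
  w : ℕ → ℕ → ℕ → ℝ
  b : ℕ → ℕ → ℝ

/-- `layerOut g H θ x ℓ i` : the output of unit `i` of layer `ℓ` on input `x`
(`layerOut g H θ x 0 = x`, and for `ℓ ≥ 1` it is `g` applied to the pre-activation). -/
noncomputable def layerOut (g : ℝ → ℝ) (H : ℕ → ℕ) (θ : NNParams) (x : ℕ → ℝ) :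
    ℕ → ℕ → ℝ
  | 0, i => x i
  | ℓ + 1, i =>
      g (∑ j ∈ Finset.range (H ℓ), θ.w (ℓ + 1) i j * layerOut g H θ x ℓ j + θ.b (ℓ + 1) i)

/-- Pre-activation `a_j^ℓ(x, θ)` of unit `j` of layer `ℓ ≥ 1`:
`a_j^ℓ = ∑_{i < H (ℓ-1)} w_{ji}^ℓ · (output of unit i of layer ℓ-1) + σ_j^ℓ`.
The outputs of the last layer `L` are `f_r(x,θ) = preact g H θ x L r` (linear output units). -/
noncomputable def preact (g : ℝ → ℝ) (H : ℕ → ℕ) (θ : NNParams) (x : ℕ → ℝ)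
    (ℓ j : ℕ) : ℝ :=
  ∑ i ∈ Finset.range (H (ℓ - 1)), θ.w ℓ j i * layerOut g H θ x (ℓ - 1) i + θ.b ℓ j

/-- Empirical risk `R_emp(θ) = (1/P) ∑_{p<P} ℒ(y^p, f(x^p, θ))`, where the network has
`L` layers with layer sizes given by `H`, the training inputs are `X p` and the labels
`Y p`, and `m` is the output dimension seen by the loss. -/
noncomputable def Remp (g : ℝ → ℝ) (H : ℕ → ℕ) (L P : ℕ) {m : ℕ}
    (X Y : ℕ → ℕ → ℝ) (loss : (ℕ → ℝ) → (Fin m → ℝ) → ℝ) (θ : NNParams) : ℝ :=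
  (1 / (P : ℝ)) * ∑ p ∈ Finset.range P,
    loss (Y p) (fun r => preact g H θ (X p) L r)

/-- Layer sizes of the network enlarged by adding `K` new neurons to layer `l`. -/
def enlargeH (H : ℕ → ℕ) (l K : ℕ) : ℕ → ℕ :=
  fun ℓ => if ℓ = l then H l + K else H ℓ

/-- The embedding `α_{ζv}` : copy all parameters, give the `k`-th new neuron of layer `l`
(`k = 0, …, K-1`, i.e. unit `H l + k`) the bias `ζ k` and incoming weights `v k`, and
set all weights from the new neurons to layer `l+1` to zero. -/
noncomputable def alphaEmb (H : ℕ → ℕ) (l K : ℕ) (ζ : ℕ → ℝ) (v : ℕ → ℕ → ℝ)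
    (θ : NNParams) : NNParams where
  w := fun ℓ j i =>
    if ℓ = l ∧ H l ≤ j then v (j - H l) i
    else if ℓ = l + 1 ∧ H l ≤ i then 0
    else θ.w ℓ j i
  b := fun ℓ j => if ℓ = l ∧ H l ≤ j then ζ (j - H l) else θ.b ℓ j

/-- The embedding `β_{ζs}` : copy all parameters except the biases of layer `l+1`, give
the `k`-th new neuron of layer `l` the bias `ζ k` and zero incoming weights, set the
outgoing weight from the `k`-th new neuron to unit `j` of layer `l+1` to `s j k`, and
replace the bias of unit `j` of layer `l+1` by `σ_j - ∑_{k<K} s j k · g (ζ k)`. -/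
noncomputable def betaEmb (g : ℝ → ℝ) (H : ℕ → ℕ) (l K : ℕ) (ζ : ℕ → ℝ)
    (s : ℕ → ℕ → ℝ) (θ : NNParams) : NNParams where
  w := fun ℓ j i =>
    if ℓ = l ∧ H l ≤ j then 0
    else if ℓ = l + 1 ∧ H l ≤ i then s j (i - H l)
    else θ.w ℓ j i
  b := fun ℓ j =>
    if ℓ = l ∧ H l ≤ j then ζ (j - H l)
    else if ℓ = l + 1 then θ.b (l + 1) j - ∑ k ∈ Finset.range K, s j k * g (ζ k)
    else θ.b ℓ j

/-- The embedding `γ_λ` : duplicate unit `h` of layer `l` into each of the `K` new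
neurons (same bias and incoming weights as unit `h`), and split the outgoing weights:
unit `h` keeps `lam 0 · w_{jh}^{l+1}` and the `k`-th new neuron (`k = 0, …, K-1`,
i.e. unit `H l + k`, corresponding to `λ_{k+1}` of the paper) gets
`lam (k+1) · w_{jh}^{l+1}`; all other parameters are copied. -/
noncomputable def gammaEmb (H : ℕ → ℕ) (l K : ℕ) (h : ℕ) (lam : ℕ → ℝ)
    (θ : NNParams) : NNParams where
  w := fun ℓ j i =>
    if ℓ = l ∧ H l ≤ j then θ.w l h i
    else if ℓ = l + 1 ∧ i = h then lam 0 * θ.w (l + 1) j h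
    else if ℓ = l + 1 ∧ H l ≤ i then lam (i - H l + 1) * θ.w (l + 1) j h
    else θ.w ℓ j i
  b := fun ℓ j => if ℓ = l ∧ H l ≤ j then θ.b l h else θ.b ℓ j

/-- `θ` with the single weight `w ℓ j i` replaced by `t`. -/
noncomputable def updW (θ : NNParams) (ℓ j i : ℕ) (t : ℝ) : NNParams :=
  ⟨fun ℓ' j' i' => if ℓ' = ℓ ∧ j' = j ∧ i' = i then t else θ.w ℓ' j' i', θ.b⟩

/-- `θ` with the single bias `b ℓ j` replaced by `t`. -/
noncomputable def updB (θ : NNParams) (ℓ j : ℕ) (t : ℝ) : NNParams :=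
  ⟨θ.w, fun ℓ' j' => if ℓ' = ℓ ∧ j' = j then t else θ.b ℓ' j'⟩

/-- `∇ R_emp(θ) = 0` : every partial derivative of the empirical risk with respect to an
actual network parameter (a weight `w ℓ j i` or a bias `b ℓ j`, `1 ≤ ℓ ≤ L`, `j < H ℓ`,
`i < H (ℓ-1)`) vanishes at `θ`. -/
def IsCritical (g : ℝ → ℝ) (H : ℕ → ℕ) (L P : ℕ) {m : ℕ}
    (X Y : ℕ → ℕ → ℝ) (loss : (ℕ → ℝ) → (Fin m → ℝ) → ℝ) (θ : NNParams) : Prop :=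
  (∀ ℓ j i, 1 ≤ ℓ → ℓ ≤ L → j < H ℓ → i < H (ℓ - 1) →
      deriv (fun t => Remp g H L P X Y loss (updW θ ℓ j i t)) (θ.w ℓ j i) = 0) ∧
  ∀ ℓ j, 1 ≤ ℓ → ℓ ≤ L → j < H ℓ →
      deriv (fun t => Remp g H L P X Y loss (updB θ ℓ j t)) (θ.b ℓ j) = 0

/-- Layer sizes after enlarging layer `p.1` by `p.2` neurons for each pair in the list. -/
def multiEnlargeH : (ℕ → ℕ) → List (ℕ × ℕ) → (ℕ → ℕ)
  | H, [] => H
  | H, (l, K) :: rest => multiEnlargeH (enlargeH H l K) rest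

/-- Composition of `α` embeddings: for each `(l, K)` in the list (in order), add `K` new
neurons to layer `l` via `α` with biases `ζ l` and incoming weights `v l`. -/
noncomputable def multiAlpha (ζ : ℕ → ℕ → ℝ) (v : ℕ → ℕ → ℕ → ℝ) :
    (ℕ → ℕ) → List (ℕ × ℕ) → NNParams → NNParams
  | _, [], θ => θ
  | H, (l, K) :: rest, θ =>
      multiAlpha ζ v (enlargeH H l K) rest (alphaEmb H l K (ζ l) (v l) θ)

noncomputable def multiBeta (g : ℝ → ℝ) (ζ : ℕ → ℕ → ℝ) (s : ℕ → ℕ → ℕ → ℝ) :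
    (ℕ → ℕ) → List (ℕ × ℕ) → NNParams → NNParams
  | _, [], θ => θ
  | H, (l, K) :: rest, θ =>
      multiBeta g ζ s (enlargeH H l K) rest (betaEmb g H l K (ζ l) (s l) θ)

noncomputable def multiGamma (hsel : ℕ → ℕ) (lam : ℕ → ℕ → ℝ) :
    (ℕ → ℕ) → List (ℕ × ℕ) → NNParams → NNParams
  | _, [], θ => θ
  | H, (l, K) :: rest, θ =>
      multiGamma hsel lam (enlargeH H l K) rest (gammaEmb H l K (hsel l) (lam l) θ)

/-- A single enlargement step: either a `β` embedding with zero outgoing weights, or a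
`γ` embedding. -/
inductive EmbStep where
  | beta (l K : ℕ) (ζ : ℕ → ℝ)
  | gamma (l K : ℕ) (h : ℕ) (lam : ℕ → ℝ)

def EmbStep.layer : EmbStep → ℕ
  | .beta l _ _ => l
  | .gamma l _ _ _ => l

def EmbStep.count : EmbStep → ℕ
  | .beta _ K _ => K
  | .gamma _ K _ _ => K

noncomputable def EmbStep.apply (g : ℝ → ℝ) (H : ℕ → ℕ) (θ : NNParams) : EmbStep → NNParams
  | .beta l K ζ => betaEmb g H l K ζ (fun _ _ => 0) θ
  | .gamma l K h lam => gammaEmb H l K h lam θ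

def EmbStep.OK (H : ℕ → ℕ) (L : ℕ) : EmbStep → Prop
  | .beta l _ _ => 1 ≤ l ∧ l + 1 ≤ L
  | .gamma l K h lam => 1 ≤ l ∧ l + 1 ≤ L ∧ h < H l ∧ ∑ i ∈ Finset.range (K + 1), lam i = 1

noncomputable def applySteps (g : ℝ → ℝ) : (ℕ → ℕ) → List EmbStep → NNParams → NNParams
  | _, [], θ => θ
  | H, st :: rest, θ =>
      applySteps g (enlargeH H st.layer st.count) rest (EmbStep.apply g H θ st)

def stepsH : (ℕ → ℕ) → List EmbStep → (ℕ → ℕ)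
  | H, [] => H
  | H, st :: rest => stepsH (enlargeH H st.layer st.count) rest

open Finset

/-! ### Tangent (forward-mode derivative) machinery -/

noncomputable def tang (g : ℝ → ℝ) (H : ℕ → ℕ) (θ : NNParams) (x : ℕ → ℝ)
    (dW : ℕ → ℕ → ℕ → ℝ) (dB : ℕ → ℕ → ℝ) : ℕ → ℕ → ℝ
  | 0, _ => 0
  | ℓ + 1, i =>
      deriv g (∑ j ∈ Finset.range (H ℓ), θ.w (ℓ + 1) i j * layerOut g H θ x ℓ j + θ.b (ℓ + 1) i) *
        (∑ j ∈ Finset.range (H ℓ),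
            (dW (ℓ + 1) i j * layerOut g H θ x ℓ j + θ.w (ℓ + 1) i j * tang g H θ x dW dB ℓ j)
          + dB (ℓ + 1) i)

noncomputable def tangPre (g : ℝ → ℝ) (H : ℕ → ℕ) (θ : NNParams) (x : ℕ → ℝ)
    (dW : ℕ → ℕ → ℕ → ℝ) (dB : ℕ → ℕ → ℝ) (ℓ j : ℕ) : ℝ :=
  ∑ i ∈ Finset.range (H (ℓ - 1)),
      (dW ℓ j i * layerOut g H θ x (ℓ - 1) i + θ.w ℓ j i * tang g H θ x dW dB (ℓ - 1) i)
    + dB ℓ j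

lemma tang_succ (g : ℝ → ℝ) (H : ℕ → ℕ) (θ : NNParams) (x : ℕ → ℝ)
    (dW : ℕ → ℕ → ℕ → ℝ) (dB : ℕ → ℕ → ℝ) (ℓ i : ℕ) :
    tang g H θ x dW dB (ℓ + 1) i =
      deriv g (preact g H θ x (ℓ + 1) i) * tangPre g H θ x dW dB (ℓ + 1) i := rfl

lemma layerOut_succ (g : ℝ → ℝ) (H : ℕ → ℕ) (θ : NNParams) (x : ℕ → ℝ) (ℓ i : ℕ) :
    layerOut g H θ x (ℓ + 1) i = g (preact g H θ x (ℓ + 1) i) := rfl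

lemma hasDerivAt_layerOut {g : ℝ → ℝ} (hg : Differentiable ℝ g) (H : ℕ → ℕ)
    (Θ : ℝ → NNParams) (t₀ : ℝ) (θ : NNParams) (hΘ : Θ t₀ = θ)
    (dW : ℕ → ℕ → ℕ → ℝ) (dB : ℕ → ℕ → ℝ)
    (hW : ∀ ℓ j i, HasDerivAt (fun t => (Θ t).w ℓ j i) (dW ℓ j i) t₀)
    (hB : ∀ ℓ j, HasDerivAt (fun t => (Θ t).b ℓ j) (dB ℓ j) t₀)
    (x : ℕ → ℝ) :
    ∀ ℓ i, HasDerivAt (fun t => layerOut g H (Θ t) x ℓ i) (tang g H θ x dW dB ℓ i) t₀ := by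
  intro ℓ
  induction ℓ with
  | zero =>
      intro i
      simpa [layerOut, tang] using hasDerivAt_const t₀ (x i)
  | succ ℓ ih =>
      intro i
      have hS : HasDerivAt
          (fun t => ∑ j ∈ Finset.range (H ℓ),
              (Θ t).w (ℓ + 1) i j * layerOut g H (Θ t) x ℓ j + (Θ t).b (ℓ + 1) i)
          (∑ j ∈ Finset.range (H ℓ),
              (dW (ℓ + 1) i j * layerOut g H θ x ℓ j +
                θ.w (ℓ + 1) i j * tang g H θ x dW dB ℓ j) + dB (ℓ + 1) i) t₀ := by
        refine HasDerivAt.add ?_ (hB _ _)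
        refine HasDerivAt.fun_sum fun j hj => ?_
        simpa [hΘ] using (hW (ℓ + 1) i j).fun_mul (ih j)
      have hgd : HasDerivAt g
          (deriv g (∑ j ∈ Finset.range (H ℓ),
            θ.w (ℓ + 1) i j * layerOut g H θ x ℓ j + θ.b (ℓ + 1) i))
          (∑ j ∈ Finset.range (H ℓ),
            (Θ t₀).w (ℓ + 1) i j * layerOut g H (Θ t₀) x ℓ j + (Θ t₀).b (ℓ + 1) i) := by
        rw [hΘ]; exact (hg _).hasDerivAt
      have := hgd.comp t₀ hS
      simpa [layerOut, tang, Function.comp_def] using this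

lemma hasDerivAt_preact {g : ℝ → ℝ} (hg : Differentiable ℝ g) (H : ℕ → ℕ)
    (Θ : ℝ → NNParams) (t₀ : ℝ) (θ : NNParams) (hΘ : Θ t₀ = θ)
    (dW : ℕ → ℕ → ℕ → ℝ) (dB : ℕ → ℕ → ℝ)
    (hW : ∀ ℓ j i, HasDerivAt (fun t => (Θ t).w ℓ j i) (dW ℓ j i) t₀)
    (hB : ∀ ℓ j, HasDerivAt (fun t => (Θ t).b ℓ j) (dB ℓ j) t₀)
    (x : ℕ → ℝ) (ℓ j : ℕ) :
    HasDerivAt (fun t => preact g H (Θ t) x ℓ j) (tangPre g H θ x dW dB ℓ j) t₀ := by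
  unfold preact tangPre
  refine HasDerivAt.add ?_ (hB _ _)
  refine HasDerivAt.fun_sum fun i hi => ?_
  simpa [hΘ] using (hW ℓ j i).fun_mul (hasDerivAt_layerOut hg H Θ t₀ θ hΘ dW dB hW hB x (ℓ - 1) i)

noncomputable def gradTerm (g : ℝ → ℝ) (H : ℕ → ℕ) (L P : ℕ) {m : ℕ} (X Y : ℕ → ℕ → ℝ)
    (loss : (ℕ → ℝ) → (Fin m → ℝ) → ℝ) (θ : NNParams)
    (dW : ℕ → ℕ → ℕ → ℝ) (dB : ℕ → ℕ → ℝ) : ℝ :=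
  (1 / (P : ℝ)) * ∑ p ∈ Finset.range P,
    (fderiv ℝ (fun z : EuclideanSpace ℝ (Fin m) => loss (Y p) z)
        ((EuclideanSpace.equiv (Fin m) ℝ).symm (fun r => preact g H θ (X p) L r)))
      ((EuclideanSpace.equiv (Fin m) ℝ).symm (fun r => tangPre g H θ (X p) dW dB L r))

lemma hasDerivAt_Remp {g : ℝ → ℝ} (hg : Differentiable ℝ g) (H : ℕ → ℕ)
    (L P : ℕ) {m : ℕ} (X Y : ℕ → ℕ → ℝ) (loss : (ℕ → ℝ) → (Fin m → ℝ) → ℝ)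
    (hloss : ∀ y : ℕ → ℝ, Differentiable ℝ (fun z : EuclideanSpace ℝ (Fin m) => loss y z))
    (Θ : ℝ → NNParams) (t₀ : ℝ) (θ : NNParams) (hΘ : Θ t₀ = θ)
    (dW : ℕ → ℕ → ℕ → ℝ) (dB : ℕ → ℕ → ℝ)
    (hW : ∀ ℓ j i, HasDerivAt (fun t => (Θ t).w ℓ j i) (dW ℓ j i) t₀)
    (hB : ∀ ℓ j, HasDerivAt (fun t => (Θ t).b ℓ j) (dB ℓ j) t₀) :
    HasDerivAt (fun t => Remp g H L P X Y loss (Θ t))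
      (gradTerm g H L P X Y loss θ dW dB) t₀ := by
  unfold Remp gradTerm
  refine HasDerivAt.const_mul _ ?_
  refine HasDerivAt.fun_sum fun p hp => ?_
  have hFpi : HasDerivAt (fun t => (fun r => preact g H (Θ t) (X p) L r : Fin m → ℝ))
      (fun r => tangPre g H θ (X p) dW dB L r) t₀ :=
    hasDerivAt_pi.mpr fun r => hasDerivAt_preact hg H Θ t₀ θ hΘ dW dB hW hB (X p) L r
  have hF : HasDerivAt
      (fun t => (EuclideanSpace.equiv (Fin m) ℝ).symm (fun r => preact g H (Θ t) (X p) L r))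
      ((EuclideanSpace.equiv (Fin m) ℝ).symm (fun r => tangPre g H θ (X p) dW dB L r)) t₀ :=
    (((EuclideanSpace.equiv (Fin m) ℝ).symm :
        (Fin m → ℝ) →L[ℝ] EuclideanSpace ℝ (Fin m)).hasFDerivAt).comp_hasDerivAt t₀ hFpi
  have hcomp := ((hloss (Y p)) _).hasFDerivAt.comp_hasDerivAt t₀ hF
  rw [hΘ] at hcomp
  exact hcomp

/-! ### Indicator seeds and the criticality characterization -/

noncomputable def indW (ℓ₀ j₀ i₀ : ℕ) : ℕ → ℕ → ℕ → ℝ :=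
  fun ℓ j i => if ℓ = ℓ₀ ∧ j = j₀ ∧ i = i₀ then 1 else 0

noncomputable def indB (ℓ₀ j₀ : ℕ) : ℕ → ℕ → ℝ :=
  fun ℓ j => if ℓ = ℓ₀ ∧ j = j₀ then 1 else 0

def zW : ℕ → ℕ → ℕ → ℝ := fun _ _ _ => 0
def zB : ℕ → ℕ → ℝ := fun _ _ => 0

lemma updW_self (θ : NNParams) (ℓ j i : ℕ) : updW θ ℓ j i (θ.w ℓ j i) = θ := by
  cases θ with
  | mk w b =>
      simp only [updW, NNParams.mk.injEq]
      refine ⟨?_, trivial⟩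
      funext ℓ' j' i'
      split
      · next hc => rw [hc.1, hc.2.1, hc.2.2]
      · rfl

lemma updB_self (θ : NNParams) (ℓ j : ℕ) : updB θ ℓ j (θ.b ℓ j) = θ := by
  cases θ with
  | mk w b =>
      simp only [updB, NNParams.mk.injEq]
      refine ⟨trivial, ?_⟩
      funext ℓ' j'
      split
      · next hc => rw [hc.1, hc.2]
      · rfl

lemma hasDerivAt_Remp_updW {g : ℝ → ℝ} (hg : Differentiable ℝ g) (H : ℕ → ℕ)
    (L P : ℕ) {m : ℕ} (X Y : ℕ → ℕ → ℝ) (loss : (ℕ → ℝ) → (Fin m → ℝ) → ℝ)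
    (hloss : ∀ y : ℕ → ℝ, Differentiable ℝ (fun z : EuclideanSpace ℝ (Fin m) => loss y z))
    (θ : NNParams) (ℓ₀ j₀ i₀ : ℕ) :
    HasDerivAt (fun t => Remp g H L P X Y loss (updW θ ℓ₀ j₀ i₀ t))
      (gradTerm g H L P X Y loss θ (indW ℓ₀ j₀ i₀) zB) (θ.w ℓ₀ j₀ i₀) := by
  refine hasDerivAt_Remp hg H L P X Y loss hloss (updW θ ℓ₀ j₀ i₀) _ θ
    (updW_self θ ℓ₀ j₀ i₀) _ _ ?_ ?_
  · intro ℓ j i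
    by_cases hc : ℓ = ℓ₀ ∧ j = j₀ ∧ i = i₀
    · simpa [updW, indW, hc] using hasDerivAt_id' (θ.w ℓ₀ j₀ i₀)
    · simpa [updW, indW, hc] using hasDerivAt_const (θ.w ℓ₀ j₀ i₀) (θ.w ℓ j i)
  · intro ℓ j
    simpa [updW, zB] using hasDerivAt_const (θ.w ℓ₀ j₀ i₀) (θ.b ℓ j)

lemma hasDerivAt_Remp_updB {g : ℝ → ℝ} (hg : Differentiable ℝ g) (H : ℕ → ℕ)
    (L P : ℕ) {m : ℕ} (X Y : ℕ → ℕ → ℝ) (loss : (ℕ → ℝ) → (Fin m → ℝ) → ℝ)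
    (hloss : ∀ y : ℕ → ℝ, Differentiable ℝ (fun z : EuclideanSpace ℝ (Fin m) => loss y z))
    (θ : NNParams) (ℓ₀ j₀ : ℕ) :
    HasDerivAt (fun t => Remp g H L P X Y loss (updB θ ℓ₀ j₀ t))
      (gradTerm g H L P X Y loss θ zW (indB ℓ₀ j₀)) (θ.b ℓ₀ j₀) := by
  refine hasDerivAt_Remp hg H L P X Y loss hloss (updB θ ℓ₀ j₀) _ θ
    (updB_self θ ℓ₀ j₀) _ _ ?_ ?_
  · intro ℓ j i
    simpa [updB, zW] using hasDerivAt_const (θ.b ℓ₀ j₀) (θ.w ℓ j i)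
  · intro ℓ j
    by_cases hc : ℓ = ℓ₀ ∧ j = j₀
    · simpa [updB, indB, hc] using hasDerivAt_id' (θ.b ℓ₀ j₀)
    · simpa [updB, indB, hc] using hasDerivAt_const (θ.b ℓ₀ j₀) (θ.b ℓ j)

lemma isCritical_iff {g : ℝ → ℝ} (hg : Differentiable ℝ g) (H : ℕ → ℕ)
    (L P : ℕ) {m : ℕ} (X Y : ℕ → ℕ → ℝ) (loss : (ℕ → ℝ) → (Fin m → ℝ) → ℝ)
    (hloss : ∀ y : ℕ → ℝ, Differentiable ℝ (fun z : EuclideanSpace ℝ (Fin m) => loss y z))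
    (θ : NNParams) :
    IsCritical g H L P X Y loss θ ↔
      ((∀ ℓ j i, 1 ≤ ℓ → ℓ ≤ L → j < H ℓ → i < H (ℓ - 1) →
          gradTerm g H L P X Y loss θ (indW ℓ j i) zB = 0) ∧
        ∀ ℓ j, 1 ≤ ℓ → ℓ ≤ L → j < H ℓ →
          gradTerm g H L P X Y loss θ zW (indB ℓ j) = 0) := by
  unfold IsCritical
  constructor
  · rintro ⟨h1, h2⟩
    constructor
    · intro ℓ j i c1 c2 c3 c4
      rw [← (hasDerivAt_Remp_updW hg H L P X Y loss hloss θ ℓ j i).deriv]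
      exact h1 ℓ j i c1 c2 c3 c4
    · intro ℓ j c1 c2 c3
      rw [← (hasDerivAt_Remp_updB hg H L P X Y loss hloss θ ℓ j).deriv]
      exact h2 ℓ j c1 c2 c3
  · rintro ⟨h1, h2⟩
    constructor
    · intro ℓ j i c1 c2 c3 c4
      rw [(hasDerivAt_Remp_updW hg H L P X Y loss hloss θ ℓ j i).deriv]
      exact h1 ℓ j i c1 c2 c3 c4
    · intro ℓ j c1 c2 c3
      rw [(hasDerivAt_Remp_updB hg H L P X Y loss hloss θ ℓ j).deriv]
      exact h2 ℓ j c1 c2 c3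

/-! ### Linearity of the tangent in the seed -/

lemma tang_smul (g : ℝ → ℝ) (H : ℕ → ℕ) (θ : NNParams) (x : ℕ → ℝ)
    (dW : ℕ → ℕ → ℕ → ℝ) (dB : ℕ → ℕ → ℝ) (c : ℝ) :
    ∀ ℓ i, tang g H θ x (fun a b d => c * dW a b d) (fun a b => c * dB a b) ℓ i =
      c * tang g H θ x dW dB ℓ i := by
  intro ℓ
  induction ℓ with
  | zero => intro i; simp [tang]
  | succ ℓ ih =>
      intro i
      simp only [tang, ih]
      rw [show (∑ j ∈ Finset.range (H ℓ),
          (c * dW (ℓ + 1) i j * layerOut g H θ x ℓ j +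
            θ.w (ℓ + 1) i j * (c * tang g H θ x dW dB ℓ j))) =
          c * ∑ j ∈ Finset.range (H ℓ),
          (dW (ℓ + 1) i j * layerOut g H θ x ℓ j +
            θ.w (ℓ + 1) i j * tang g H θ x dW dB ℓ j) from by
        rw [Finset.mul_sum]; exact Finset.sum_congr rfl fun j _ => by ring]
      ring

lemma tangPre_smul (g : ℝ → ℝ) (H : ℕ → ℕ) (θ : NNParams) (x : ℕ → ℝ)
    (dW : ℕ → ℕ → ℕ → ℝ) (dB : ℕ → ℕ → ℝ) (c : ℝ) (ℓ j : ℕ) :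
    tangPre g H θ x (fun a b d => c * dW a b d) (fun a b => c * dB a b) ℓ j =
      c * tangPre g H θ x dW dB ℓ j := by
  simp only [tangPre, tang_smul]
  rw [show (∑ i ∈ Finset.range (H (ℓ - 1)),
      (c * dW ℓ j i * layerOut g H θ x (ℓ - 1) i +
        θ.w ℓ j i * (c * tang g H θ x dW dB (ℓ - 1) i))) =
      c * ∑ i ∈ Finset.range (H (ℓ - 1)),
      (dW ℓ j i * layerOut g H θ x (ℓ - 1) i +
        θ.w ℓ j i * tang g H θ x dW dB (ℓ - 1) i) from by
    rw [Finset.mul_sum]; exact Finset.sum_congr rfl fun i _ => by ring]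
  ring

lemma gradTerm_smul (g : ℝ → ℝ) (H : ℕ → ℕ) (L P : ℕ) {m : ℕ} (X Y : ℕ → ℕ → ℝ)
    (loss : (ℕ → ℝ) → (Fin m → ℝ) → ℝ) (θ : NNParams)
    (dW : ℕ → ℕ → ℕ → ℝ) (dB : ℕ → ℕ → ℝ) (c : ℝ) :
    gradTerm g H L P X Y loss θ (fun a b d => c * dW a b d) (fun a b => c * dB a b) =
      c * gradTerm g H L P X Y loss θ dW dB := by
  unfold gradTerm
  have hterm : ∀ p ∈ Finset.range P,
      (fderiv ℝ (fun z : EuclideanSpace ℝ (Fin m) => loss (Y p) z)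
          ((EuclideanSpace.equiv (Fin m) ℝ).symm (fun r => preact g H θ (X p) L r)))
        ((EuclideanSpace.equiv (Fin m) ℝ).symm
          (fun r => tangPre g H θ (X p) (fun a b d => c * dW a b d) (fun a b => c * dB a b) L r)) =
      c * (fderiv ℝ (fun z : EuclideanSpace ℝ (Fin m) => loss (Y p) z)
          ((EuclideanSpace.equiv (Fin m) ℝ).symm (fun r => preact g H θ (X p) L r)))
        ((EuclideanSpace.equiv (Fin m) ℝ).symm (fun r => tangPre g H θ (X p) dW dB L r)) := by
    intro p _
    rw [show ((EuclideanSpace.equiv (Fin m) ℝ).symm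
        (fun r => tangPre g H θ (X p) (fun a b d => c * dW a b d) (fun a b => c * dB a b) L r)) =
        c • ((EuclideanSpace.equiv (Fin m) ℝ).symm
        (fun r => tangPre g H θ (X p) dW dB L r)) from ?_]
    · rw [map_smul, smul_eq_mul]
    · rw [← map_smul]
      congr 1
      funext r
      simp [tangPre_smul, Pi.smul_apply, smul_eq_mul]
  rw [Finset.sum_congr rfl hterm, ← Finset.mul_sum]
  ring

/-! ### Generic helpers -/

lemma tang_zero (g : ℝ → ℝ) (H : ℕ → ℕ) (θ : NNParams) (x : ℕ → ℝ) :
    ∀ ℓ i, tang g H θ x zW zB ℓ i = 0 := by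
  intro ℓ
  induction ℓ with
  | zero => intro i; rfl
  | succ ℓ ih => intro i; simp [tang, zW, zB, ih]

lemma tangPre_zero (g : ℝ → ℝ) (H : ℕ → ℕ) (θ : NNParams) (x : ℕ → ℝ) (ℓ j : ℕ) :
    tangPre g H θ x zW zB ℓ j = 0 := by
  simp [tangPre, zW, zB, tang_zero]

lemma gradTerm_zero (g : ℝ → ℝ) (H : ℕ → ℕ) (L P : ℕ) {m : ℕ} (X Y : ℕ → ℕ → ℝ)
    (loss : (ℕ → ℝ) → (Fin m → ℝ) → ℝ) (θ : NNParams) :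
    gradTerm g H L P X Y loss θ zW zB = 0 := by
  unfold gradTerm
  rw [Finset.sum_eq_zero, mul_zero]
  intro p _
  rw [show ((EuclideanSpace.equiv (Fin m) ℝ).symm
      (fun r => tangPre g H θ (X p) zW zB L r)) = 0 from ?_]
  · rw [map_zero]
  · rw [show (fun r : Fin m => tangPre g H θ (X p) zW zB L r) = fun _ : Fin m => (0:ℝ) from
      funext fun r => tangPre_zero g H θ (X p) L r]
    exact map_zero _

lemma layerOut_eq_g_preact (g : ℝ → ℝ) (H : ℕ → ℕ) (θ : NNParams) (x : ℕ → ℝ)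
    {ℓ : ℕ} (hℓ : 1 ≤ ℓ) (i : ℕ) :
    layerOut g H θ x ℓ i = g (preact g H θ x ℓ i) := by
  obtain ⟨m, rfl⟩ : ∃ m, ℓ = m + 1 := ⟨ℓ - 1, by omega⟩
  rfl

lemma tang_eq_mul (g : ℝ → ℝ) (H : ℕ → ℕ) (θ : NNParams) (x : ℕ → ℝ)
    (dW : ℕ → ℕ → ℕ → ℝ) (dB : ℕ → ℕ → ℝ) {ℓ : ℕ} (hℓ : 1 ≤ ℓ) (i : ℕ) :
    tang g H θ x dW dB ℓ i = deriv g (preact g H θ x ℓ i) * tangPre g H θ x dW dB ℓ i := by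
  obtain ⟨m, rfl⟩ : ∃ m, ℓ = m + 1 := ⟨ℓ - 1, by omega⟩
  rfl

lemma sum_range_add' (f : ℕ → ℝ) (a b : ℕ) :
    ∑ i ∈ Finset.range (a + b), f i =
      ∑ i ∈ Finset.range a, f i + ∑ k ∈ Finset.range b, f (a + k) := by
  induction b with
  | zero => simp
  | succ b ih => rw [← Nat.add_assoc, Finset.sum_range_succ, ih, Finset.sum_range_succ, add_assoc]

lemma sum_eq_sum_diff (n h : ℕ) (hh : h < n) (F G : ℕ → ℝ)
    (hFG : ∀ i, i < n → i ≠ h → F i = G i) :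
    ∑ i ∈ Finset.range n, F i = ∑ i ∈ Finset.range n, G i + (F h - G h) := by
  have key : ∀ i ∈ Finset.range n, F i = G i + (if i = h then F h - G h else 0) := by
    intro i hi
    by_cases hih : i = h
    · subst hih; simp
    · simp [hih, hFG i (Finset.mem_range.mp hi) hih]
  rw [Finset.sum_congr rfl key, Finset.sum_add_distrib,
    Finset.sum_ite_eq' (Finset.range n) h (fun _ => F h - G h)]
  simp [hh]

lemma key_comb (F G : Finset ℕ) (lam0 : ℝ) (lamk a wT bk dWh : ℕ → ℝ) (dWk : ℕ → ℕ → ℝ)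
    (b0 : ℝ) (hl : lam0 + ∑ k ∈ G, lamk k = 1) :
    lam0 * (∑ j ∈ F, (dWh j * a j + wT j) + b0) +
      ∑ k ∈ G, lamk k * (∑ j ∈ F, (dWk k j * a j + wT j) + bk k) =
    ∑ j ∈ F, ((lam0 * dWh j + ∑ k ∈ G, lamk k * dWk k j) * a j + wT j) +
      (lam0 * b0 + ∑ k ∈ G, lamk k * bk k) := by
  have step : ∀ j ∈ F, ((lam0 * dWh j + ∑ k ∈ G, lamk k * dWk k j) * a j + wT j)
      = lam0 * (dWh j * a j + wT j) + ∑ k ∈ G, lamk k * (dWk k j * a j + wT j) := by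
    intro j _
    rw [show (∑ k ∈ G, lamk k * (dWk k j * a j + wT j)) =
        (∑ k ∈ G, lamk k * dWk k j) * a j + (∑ k ∈ G, lamk k) * wT j from by
      rw [Finset.sum_mul, Finset.sum_mul, ← Finset.sum_add_distrib]
      exact Finset.sum_congr rfl fun k _ => by ring]
    have hs : (∑ k ∈ G, lamk k) = 1 - lam0 := by linarith
    rw [hs]; ring
  rw [Finset.sum_congr rfl step]
  rw [show (∑ j ∈ F, (lam0 * (dWh j * a j + wT j) + ∑ k ∈ G, lamk k * (dWk k j * a j + wT j)))
      = (∑ j ∈ F, lam0 * (dWh j * a j + wT j)) +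
        ∑ k ∈ G, ∑ j ∈ F, lamk k * (dWk k j * a j + wT j) from by
    rw [Finset.sum_add_distrib]; congr 1; exact Finset.sum_comm]
  rw [show (∑ k ∈ G, lamk k * (∑ j ∈ F, (dWk k j * a j + wT j) + bk k))
      = ∑ k ∈ G, (∑ j ∈ F, lamk k * (dWk k j * a j + wT j) + lamk k * bk k) from
    Finset.sum_congr rfl fun k _ => by rw [mul_add, Finset.mul_sum]]
  simp only [Finset.sum_add_distrib, mul_add, Finset.mul_sum]
  ring

lemma enlargeH_ne (H : ℕ → ℕ) (l K : ℕ) {ℓ : ℕ} (hℓ : ℓ ≠ l) : enlargeH H l K ℓ = H ℓ := by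
  simp [enlargeH, hℓ]

lemma enlargeH_eq (H : ℕ → ℕ) (l K : ℕ) : enlargeH H l K l = H l + K := by
  simp [enlargeH]

/-! ### Entry lemmas for `gammaEmb` -/

section GammaEntries
variable (H : ℕ → ℕ) (l K h : ℕ) (lam : ℕ → ℝ) (θ : NNParams)

lemma gammaW_low {ℓ : ℕ} (h1 : ℓ ≠ l) (h2 : ℓ ≠ l + 1) (j i : ℕ) :
    (gammaEmb H l K h lam θ).w ℓ j i = θ.w ℓ j i := by
  simp [gammaEmb, h1, h2]

lemma gammaW_lrow {j : ℕ} (hj : j < H l) (i : ℕ) :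
    (gammaEmb H l K h lam θ).w l j i = θ.w l j i := by
  simp [gammaEmb, not_le.mpr hj, show l ≠ l + 1 from by omega]

lemma gammaW_lnew (k i : ℕ) :
    (gammaEmb H l K h lam θ).w l (H l + k) i = θ.w l h i := by
  simp [gammaEmb, Nat.le_add_right]

lemma gammaW_l1 {i : ℕ} (hi2 : i < H l) (hi : i ≠ h) (j : ℕ) :
    (gammaEmb H l K h lam θ).w (l + 1) j i = θ.w (l + 1) j i := by
  simp [gammaEmb, hi, not_le.mpr hi2, show l + 1 ≠ l from by omega]

lemma gammaW_l1h (j : ℕ) :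
    (gammaEmb H l K h lam θ).w (l + 1) j h = lam 0 * θ.w (l + 1) j h := by
  simp [gammaEmb, show l + 1 ≠ l from by omega]

lemma gammaW_l1new (hh : h < H l) (j k : ℕ) :
    (gammaEmb H l K h lam θ).w (l + 1) j (H l + k) = lam (k + 1) * θ.w (l + 1) j h := by
  simp [gammaEmb, show l + 1 ≠ l from by omega, show H l + k ≠ h from by omega,
    Nat.le_add_right, Nat.add_sub_cancel_left]

lemma gammaB_ne {ℓ : ℕ} (h1 : ℓ ≠ l) (j : ℕ) :
    (gammaEmb H l K h lam θ).b ℓ j = θ.b ℓ j := by simp [gammaEmb, h1]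

lemma gammaB_lrow {j : ℕ} (hj : j < H l) :
    (gammaEmb H l K h lam θ).b l j = θ.b l j := by simp [gammaEmb, not_le.mpr hj]

lemma gammaB_lnew (k : ℕ) :
    (gammaEmb H l K h lam θ).b l (H l + k) = θ.b l h := by
  simp [gammaEmb, Nat.le_add_right]

end GammaEntries

/-! ### Forward pass through a `γ` embedding -/

section GammaForward
variable (g : ℝ → ℝ) (H : ℕ → ℕ) (l K h : ℕ) (lam : ℕ → ℝ) (θ : NNParams) (x : ℕ → ℝ)

lemma gammaLow (hl : 1 ≤ l) :
    ∀ ℓ, ℓ < l → ∀ i, layerOut g (enlargeH H l K) (gammaEmb H l K h lam θ) x ℓ i =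
      layerOut g H θ x ℓ i := by
  intro ℓ
  induction ℓ with
  | zero => intro _ i; rfl
  | succ ℓ ih =>
      intro hℓ i
      simp only [layerOut]
      congr 1
      rw [enlargeH_ne H l K (show ℓ ≠ l from by omega),
        gammaB_ne H l K h lam θ (show ℓ + 1 ≠ l from by omega)]
      congr 1
      exact Finset.sum_congr rfl fun j hj => by
        rw [gammaW_low H l K h lam θ (show ℓ + 1 ≠ l from by omega)
          (show ℓ + 1 ≠ l + 1 from by omega), ih (by omega) j]

lemma gammaPre_l_old (hl : 1 ≤ l) {i : ℕ} (hi : i < H l) :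
    preact g (enlargeH H l K) (gammaEmb H l K h lam θ) x l i = preact g H θ x l i := by
  unfold preact
  rw [enlargeH_ne H l K (show l - 1 ≠ l from by omega), gammaB_lrow H l K h lam θ hi]
  congr 1
  exact Finset.sum_congr rfl fun j hj => by
    rw [gammaW_lrow H l K h lam θ hi j, gammaLow g H l K h lam θ x hl (l - 1) (by omega) j]

lemma gammaPre_l_new (hl : 1 ≤ l) (k : ℕ) :
    preact g (enlargeH H l K) (gammaEmb H l K h lam θ) x l (H l + k) = preact g H θ x l h := by
  unfold preact
  rw [enlargeH_ne H l K (show l - 1 ≠ l from by omega), gammaB_lnew H l K h lam θ k]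
  congr 1
  exact Finset.sum_congr rfl fun j hj => by
    rw [gammaW_lnew H l K h lam θ k j, gammaLow g H l K h lam θ x hl (l - 1) (by omega) j]

lemma gammaOut_l_old (hl : 1 ≤ l) {i : ℕ} (hi : i < H l) :
    layerOut g (enlargeH H l K) (gammaEmb H l K h lam θ) x l i = layerOut g H θ x l i := by
  rw [layerOut_eq_g_preact _ _ _ _ hl, layerOut_eq_g_preact _ _ _ _ hl,
    gammaPre_l_old g H l K h lam θ x hl hi]

lemma gammaOut_l_new (hl : 1 ≤ l) (k : ℕ) :
    layerOut g (enlargeH H l K) (gammaEmb H l K h lam θ) x l (H l + k) =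
      layerOut g H θ x l h := by
  rw [layerOut_eq_g_preact _ _ _ _ hl, layerOut_eq_g_preact _ _ _ _ hl,
    gammaPre_l_new g H l K h lam θ x hl k]

lemma gammaCollapse (hl : 1 ≤ l) (hh : h < H l)
    (hsum : ∑ i ∈ Finset.range (K + 1), lam i = 1) (r : ℕ) :
    ∑ j ∈ Finset.range (enlargeH H l K l),
        (gammaEmb H l K h lam θ).w (l + 1) r j *
          layerOut g (enlargeH H l K) (gammaEmb H l K h lam θ) x l j =
      ∑ j ∈ Finset.range (H l), θ.w (l + 1) r j * layerOut g H θ x l j := by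
  have hsum' : ∑ k ∈ Finset.range K, lam (k + 1) = 1 - lam 0 := by
    have h0 := Finset.sum_range_succ' lam K
    rw [hsum] at h0; linarith
  rw [enlargeH_eq, sum_range_add']
  have e1 : ∑ j ∈ Finset.range (H l),
      (gammaEmb H l K h lam θ).w (l + 1) r j *
        layerOut g (enlargeH H l K) (gammaEmb H l K h lam θ) x l j =
      (∑ j ∈ Finset.range (H l), θ.w (l + 1) r j * layerOut g H θ x l j) +
        ((lam 0 - 1) * (θ.w (l + 1) r h * layerOut g H θ x l h)) := by
    rw [sum_eq_sum_diff (H l) h hh _ _ (fun i hi hih => by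
      rw [gammaW_l1 H l K h lam θ hi hih r, gammaOut_l_old g H l K h lam θ x hl hi])]
    rw [gammaW_l1h H l K h lam θ r, gammaOut_l_old g H l K h lam θ x hl hh]
    ring
  have e2 : ∑ k ∈ Finset.range K,
      (gammaEmb H l K h lam θ).w (l + 1) r (H l + k) *
        layerOut g (enlargeH H l K) (gammaEmb H l K h lam θ) x l (H l + k) =
      (1 - lam 0) * (θ.w (l + 1) r h * layerOut g H θ x l h) := by
    rw [Finset.sum_congr rfl (fun k _ => by
      rw [gammaW_l1new H l K h lam θ hh r k, gammaOut_l_new g H l K h lam θ x hl k, mul_assoc])]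
    rw [← Finset.sum_mul, hsum']
  rw [e1, e2]; ring

lemma gammaOut_ne (hl : 1 ≤ l) (hh : h < H l)
    (hsum : ∑ i ∈ Finset.range (K + 1), lam i = 1) :
    ∀ ℓ, ℓ ≠ l → ∀ i, layerOut g (enlargeH H l K) (gammaEmb H l K h lam θ) x ℓ i =
      layerOut g H θ x ℓ i := by
  intro ℓ
  induction ℓ with
  | zero => intro _ i; rfl
  | succ ℓ ih =>
      intro hℓ i
      by_cases hℓl : ℓ = l
      · simp only [layerOut]
        rw [hℓl]
        congr 1
        rw [gammaCollapse g H l K h lam θ x hl hh hsum i,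
          gammaB_ne H l K h lam θ (show l + 1 ≠ l from by omega)]
      · simp only [layerOut]
        congr 1
        rw [enlargeH_ne H l K hℓl, gammaB_ne H l K h lam θ hℓ]
        congr 1
        exact Finset.sum_congr rfl fun j hj => by
          rw [gammaW_low H l K h lam θ hℓ (show ℓ + 1 ≠ l + 1 from by simpa using hℓl), ih hℓl j]

lemma gammaPre_high (hl : 1 ≤ l) (hh : h < H l)
    (hsum : ∑ i ∈ Finset.range (K + 1), lam i = 1)
    (ℓ : ℕ) (hℓ : l + 1 ≤ ℓ) (r : ℕ) :
    preact g (enlargeH H l K) (gammaEmb H l K h lam θ) x ℓ r = preact g H θ x ℓ r := by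
  obtain ⟨m, rfl⟩ : ∃ m, ℓ = m + 1 := ⟨ℓ - 1, by omega⟩
  unfold preact
  simp only [Nat.add_sub_cancel]
  by_cases hm : m = l
  · rw [hm]
    rw [gammaCollapse g H l K h lam θ x hl hh hsum r,
      gammaB_ne H l K h lam θ (show l + 1 ≠ l from by omega)]
  · rw [enlargeH_ne H l K hm, gammaB_ne H l K h lam θ (show m + 1 ≠ l from by omega)]
    congr 1
    exact Finset.sum_congr rfl fun j hj => by
      rw [gammaW_low H l K h lam θ (show m + 1 ≠ l from by omega)
        (show m + 1 ≠ l + 1 from by simpa using hm),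
        gammaOut_ne g H l K h lam θ x hl hh hsum m hm j]

end GammaForward

/-! ### Tangent transfer through a `γ` embedding -/

def GammaCompat (H : ℕ → ℕ) (l K h : ℕ) (lam : ℕ → ℝ)
    (dW' : ℕ → ℕ → ℕ → ℝ) (dB' : ℕ → ℕ → ℝ)
    (dWs : ℕ → ℕ → ℕ → ℝ) (dBs : ℕ → ℕ → ℝ) : Prop :=
  (∀ ℓ j i, ℓ ≠ l → ℓ ≠ l + 1 → dWs ℓ j i = dW' ℓ j i) ∧
  (∀ j i, j < H l → j ≠ h → dWs l j i = dW' l j i) ∧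
  (∀ i, dWs l h i = lam 0 * dW' l h i +
      ∑ k ∈ Finset.range K, lam (k + 1) * dW' l (H l + k) i) ∧
  (∀ j i, i < H l → i ≠ h → dWs (l + 1) j i = dW' (l + 1) j i) ∧
  (∀ j, dWs (l + 1) j h = dW' (l + 1) j h + ∑ k ∈ Finset.range K, dW' (l + 1) j (H l + k)) ∧
  (∀ ℓ j, ℓ ≠ l → dBs ℓ j = dB' ℓ j) ∧
  (∀ j, j < H l → j ≠ h → dBs l j = dB' l j) ∧
  (dBs l h = lam 0 * dB' l h + ∑ k ∈ Finset.range K, lam (k + 1) * dB' l (H l + k))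

section GammaTang
variable (g : ℝ → ℝ) (H : ℕ → ℕ) (l K h : ℕ) (lam : ℕ → ℝ) (θ : NNParams) (x : ℕ → ℝ)
  (dW' dWs : ℕ → ℕ → ℕ → ℝ) (dB' dBs : ℕ → ℕ → ℝ)

lemma gTangLow (hl : 1 ≤ l) (hc : GammaCompat H l K h lam dW' dB' dWs dBs) :
    ∀ ℓ, ℓ < l → ∀ i,
      tang g (enlargeH H l K) (gammaEmb H l K h lam θ) x dW' dB' ℓ i =
        tang g H θ x dWs dBs ℓ i := by
  obtain ⟨hW1, hW2, hW3, hW4, hW5, hB1, hB2, hB3⟩ := hc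
  intro ℓ
  induction ℓ with
  | zero => intro _ i; rfl
  | succ ℓ ih =>
      intro hℓ i
      simp only [tang]
      rw [enlargeH_ne H l K (show ℓ ≠ l from by omega),
        gammaB_ne H l K h lam θ (show ℓ + 1 ≠ l from by omega),
        hB1 (ℓ + 1) i (show ℓ + 1 ≠ l from by omega)]
      have hA : ∑ j ∈ Finset.range (H ℓ),
          (gammaEmb H l K h lam θ).w (ℓ + 1) i j *
            layerOut g (enlargeH H l K) (gammaEmb H l K h lam θ) x ℓ j =
          ∑ j ∈ Finset.range (H ℓ), θ.w (ℓ + 1) i j * layerOut g H θ x ℓ j :=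
        Finset.sum_congr rfl fun j hj => by
          rw [gammaW_low H l K h lam θ (show ℓ + 1 ≠ l from by omega)
            (show ℓ + 1 ≠ l + 1 from by omega),
            gammaLow g H l K h lam θ x hl ℓ (by omega) j]
      have hS : ∑ j ∈ Finset.range (H ℓ),
          (dW' (ℓ + 1) i j * layerOut g (enlargeH H l K) (gammaEmb H l K h lam θ) x ℓ j +
            (gammaEmb H l K h lam θ).w (ℓ + 1) i j *
              tang g (enlargeH H l K) (gammaEmb H l K h lam θ) x dW' dB' ℓ j) =
          ∑ j ∈ Finset.range (H ℓ),
          (dWs (ℓ + 1) i j * layerOut g H θ x ℓ j +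
            θ.w (ℓ + 1) i j * tang g H θ x dWs dBs ℓ j) :=
        Finset.sum_congr rfl fun j hj => by
          rw [hW1 (ℓ + 1) i j (show ℓ + 1 ≠ l from by omega) (show ℓ + 1 ≠ l + 1 from by omega),
            gammaW_low H l K h lam θ (show ℓ + 1 ≠ l from by omega)
              (show ℓ + 1 ≠ l + 1 from by omega),
            gammaLow g H l K h lam θ x hl ℓ (by omega) j, ih (by omega) j]
      rw [hA, hS]

lemma gTangPre_l_old (hl : 1 ≤ l) (hc : GammaCompat H l K h lam dW' dB' dWs dBs)
    {i : ℕ} (hi : i < H l) (hih : i ≠ h) :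
    tangPre g (enlargeH H l K) (gammaEmb H l K h lam θ) x dW' dB' l i =
      tangPre g H θ x dWs dBs l i := by
  obtain ⟨hW1, hW2, hW3, hW4, hW5, hB1, hB2, hB3⟩ := hc
  unfold tangPre
  rw [enlargeH_ne H l K (show l - 1 ≠ l from by omega), hB2 i hi hih]
  congr 1
  refine Finset.sum_congr rfl fun j hj => ?_
  rw [hW2 i j hi hih, gammaW_lrow H l K h lam θ hi j,
    gammaLow g H l K h lam θ x hl (l - 1) (by omega) j,
    gTangLow g H l K h lam θ x dW' dWs dB' dBs hl
      ⟨hW1, hW2, hW3, hW4, hW5, hB1, hB2, hB3⟩ (l - 1) (by omega) j]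

lemma gTang_l_old (hl : 1 ≤ l) (hc : GammaCompat H l K h lam dW' dB' dWs dBs)
    {i : ℕ} (hi : i < H l) (hih : i ≠ h) :
    tang g (enlargeH H l K) (gammaEmb H l K h lam θ) x dW' dB' l i =
      tang g H θ x dWs dBs l i := by
  rw [tang_eq_mul g _ _ x dW' dB' hl i, tang_eq_mul g H θ x dWs dBs hl i,
    gammaPre_l_old g H l K h lam θ x hl hi,
    gTangPre_l_old g H l K h lam θ x dW' dWs dB' dBs hl hc hi hih]

lemma gTangPre_l_comb (hl : 1 ≤ l) (hh : h < H l)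
    (hsum : ∑ i ∈ Finset.range (K + 1), lam i = 1)
    (hc : GammaCompat H l K h lam dW' dB' dWs dBs) :
    lam 0 * tangPre g (enlargeH H l K) (gammaEmb H l K h lam θ) x dW' dB' l h +
      ∑ k ∈ Finset.range K,
        lam (k + 1) * tangPre g (enlargeH H l K) (gammaEmb H l K h lam θ) x dW' dB' l (H l + k) =
    tangPre g H θ x dWs dBs l h := by
  obtain ⟨hW1, hW2, hW3, hW4, hW5, hB1, hB2, hB3⟩ := hc
  have hl' : lam 0 + ∑ k ∈ Finset.range K, lam (k + 1) = 1 := by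
    have h0 := Finset.sum_range_succ' lam K
    rw [hsum] at h0; linarith
  have e1 : tangPre g (enlargeH H l K) (gammaEmb H l K h lam θ) x dW' dB' l h =
      ∑ j ∈ Finset.range (H (l - 1)),
        (dW' l h j * layerOut g H θ x (l - 1) j +
          θ.w l h j * tang g H θ x dWs dBs (l - 1) j) + dB' l h := by
    unfold tangPre
    rw [enlargeH_ne H l K (show l - 1 ≠ l from by omega)]
    congr 1
    refine Finset.sum_congr rfl fun j hj => ?_
    rw [gammaW_lrow H l K h lam θ hh j,
      gammaLow g H l K h lam θ x hl (l - 1) (by omega) j,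
      gTangLow g H l K h lam θ x dW' dWs dB' dBs hl
        ⟨hW1, hW2, hW3, hW4, hW5, hB1, hB2, hB3⟩ (l - 1) (by omega) j]
  have e2 : ∀ k, tangPre g (enlargeH H l K) (gammaEmb H l K h lam θ) x dW' dB' l (H l + k) =
      ∑ j ∈ Finset.range (H (l - 1)),
        (dW' l (H l + k) j * layerOut g H θ x (l - 1) j +
          θ.w l h j * tang g H θ x dWs dBs (l - 1) j) + dB' l (H l + k) := by
    intro k
    unfold tangPre
    rw [enlargeH_ne H l K (show l - 1 ≠ l from by omega)]
    congr 1
    refine Finset.sum_congr rfl fun j hj => ?_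
    rw [gammaW_lnew H l K h lam θ k j,
      gammaLow g H l K h lam θ x hl (l - 1) (by omega) j,
      gTangLow g H l K h lam θ x dW' dWs dB' dBs hl
        ⟨hW1, hW2, hW3, hW4, hW5, hB1, hB2, hB3⟩ (l - 1) (by omega) j]
  rw [e1, Finset.sum_congr rfl (fun k (_ : k ∈ Finset.range K) => by rw [e2 k])]
  rw [show tangPre g H θ x dWs dBs l h =
      ∑ j ∈ Finset.range (H (l - 1)),
        ((lam 0 * dW' l h j + ∑ k ∈ Finset.range K, lam (k + 1) * dW' l (H l + k) j) *
            layerOut g H θ x (l - 1) j +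
          θ.w l h j * tang g H θ x dWs dBs (l - 1) j) +
        (lam 0 * dB' l h + ∑ k ∈ Finset.range K, lam (k + 1) * dB' l (H l + k)) from by
    unfold tangPre
    rw [hB3]
    congr 1
    exact Finset.sum_congr rfl fun j _ => by rw [hW3 j]]
  exact key_comb (Finset.range (H (l - 1))) (Finset.range K) (lam 0) (fun k => lam (k + 1))
    (fun j => layerOut g H θ x (l - 1) j)
    (fun j => θ.w l h j * tang g H θ x dWs dBs (l - 1) j)
    (fun k => dB' l (H l + k)) (fun j => dW' l h j) (fun k j => dW' l (H l + k) j)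
    (dB' l h) hl'

lemma gTang_l_comb (hl : 1 ≤ l) (hh : h < H l)
    (hsum : ∑ i ∈ Finset.range (K + 1), lam i = 1)
    (hc : GammaCompat H l K h lam dW' dB' dWs dBs) :
    lam 0 * tang g (enlargeH H l K) (gammaEmb H l K h lam θ) x dW' dB' l h +
      ∑ k ∈ Finset.range K,
        lam (k + 1) * tang g (enlargeH H l K) (gammaEmb H l K h lam θ) x dW' dB' l (H l + k) =
    tang g H θ x dWs dBs l h := by
  rw [tang_eq_mul g H θ x dWs dBs hl h,
    tang_eq_mul g _ _ x dW' dB' hl h, gammaPre_l_old g H l K h lam θ x hl hh]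
  rw [Finset.sum_congr rfl (fun k (_ : k ∈ Finset.range K) => by
    rw [tang_eq_mul g _ _ x dW' dB' hl (H l + k), gammaPre_l_new g H l K h lam θ x hl k])]
  rw [← gTangPre_l_comb g H l K h lam θ x dW' dWs dB' dBs hl hh hsum hc]
  rw [mul_add, Finset.mul_sum]
  congr 1
  · ring
  · exact Finset.sum_congr rfl fun k _ => by ring

lemma gTangCollapse (hl : 1 ≤ l) (hh : h < H l)
    (hsum : ∑ i ∈ Finset.range (K + 1), lam i = 1)
    (hc : GammaCompat H l K h lam dW' dB' dWs dBs) (r : ℕ) :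
    ∑ i ∈ Finset.range (enlargeH H l K l),
        (dW' (l + 1) r i * layerOut g (enlargeH H l K) (gammaEmb H l K h lam θ) x l i +
          (gammaEmb H l K h lam θ).w (l + 1) r i *
            tang g (enlargeH H l K) (gammaEmb H l K h lam θ) x dW' dB' l i) =
      ∑ i ∈ Finset.range (H l),
        (dWs (l + 1) r i * layerOut g H θ x l i +
          θ.w (l + 1) r i * tang g H θ x dWs dBs l i) := by
  obtain ⟨hW1, hW2, hW3, hW4, hW5, hB1, hB2, hB3⟩ := hc
  have hcomb := gTang_l_comb g H l K h lam θ x dW' dWs dB' dBs hl hh hsum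
    ⟨hW1, hW2, hW3, hW4, hW5, hB1, hB2, hB3⟩
  rw [enlargeH_eq, sum_range_add']
  have e1 : ∑ i ∈ Finset.range (H l),
      (dW' (l + 1) r i * layerOut g (enlargeH H l K) (gammaEmb H l K h lam θ) x l i +
        (gammaEmb H l K h lam θ).w (l + 1) r i *
          tang g (enlargeH H l K) (gammaEmb H l K h lam θ) x dW' dB' l i) =
      (∑ i ∈ Finset.range (H l),
        (dWs (l + 1) r i * layerOut g H θ x l i +
          θ.w (l + 1) r i * tang g H θ x dWs dBs l i)) +
      ((dW' (l + 1) r h * layerOut g H θ x l h +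
          lam 0 * θ.w (l + 1) r h *
            tang g (enlargeH H l K) (gammaEmb H l K h lam θ) x dW' dB' l h) -
        (dWs (l + 1) r h * layerOut g H θ x l h +
          θ.w (l + 1) r h * tang g H θ x dWs dBs l h)) := by
    rw [sum_eq_sum_diff (H l) h hh
      (fun i => dW' (l + 1) r i * layerOut g (enlargeH H l K) (gammaEmb H l K h lam θ) x l i +
        (gammaEmb H l K h lam θ).w (l + 1) r i *
          tang g (enlargeH H l K) (gammaEmb H l K h lam θ) x dW' dB' l i)
      (fun i => dWs (l + 1) r i * layerOut g H θ x l i +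
        θ.w (l + 1) r i * tang g H θ x dWs dBs l i)
      (fun i hi hih => by
        show dW' (l + 1) r i * layerOut g (enlargeH H l K) (gammaEmb H l K h lam θ) x l i +
            (gammaEmb H l K h lam θ).w (l + 1) r i *
              tang g (enlargeH H l K) (gammaEmb H l K h lam θ) x dW' dB' l i =
          dWs (l + 1) r i * layerOut g H θ x l i + θ.w (l + 1) r i * tang g H θ x dWs dBs l i
        rw [hW4 r i hi hih, gammaW_l1 H l K h lam θ hi hih r,
          gammaOut_l_old g H l K h lam θ x hl hi,
          gTang_l_old g H l K h lam θ x dW' dWs dB' dBs hl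
            ⟨hW1, hW2, hW3, hW4, hW5, hB1, hB2, hB3⟩ hi hih])]
    show _ + ((dW' (l + 1) r h * layerOut g (enlargeH H l K) (gammaEmb H l K h lam θ) x l h +
        (gammaEmb H l K h lam θ).w (l + 1) r h *
          tang g (enlargeH H l K) (gammaEmb H l K h lam θ) x dW' dB' l h) -
      (dWs (l + 1) r h * layerOut g H θ x l h + θ.w (l + 1) r h * tang g H θ x dWs dBs l h)) = _
    rw [gammaW_l1h H l K h lam θ r, gammaOut_l_old g H l K h lam θ x hl hh]
  have e2 : ∑ k ∈ Finset.range K,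
      (dW' (l + 1) r (H l + k) *
          layerOut g (enlargeH H l K) (gammaEmb H l K h lam θ) x l (H l + k) +
        (gammaEmb H l K h lam θ).w (l + 1) r (H l + k) *
          tang g (enlargeH H l K) (gammaEmb H l K h lam θ) x dW' dB' l (H l + k)) =
      (∑ k ∈ Finset.range K, dW' (l + 1) r (H l + k)) * layerOut g H θ x l h +
        θ.w (l + 1) r h * (∑ k ∈ Finset.range K,
          lam (k + 1) * tang g (enlargeH H l K) (gammaEmb H l K h lam θ) x dW' dB' l (H l + k)) := by
    rw [Finset.sum_congr rfl (fun k (_ : k ∈ Finset.range K) => by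
      rw [gammaW_l1new H l K h lam θ hh r k, gammaOut_l_new g H l K h lam θ x hl k])]
    rw [Finset.sum_add_distrib, Finset.sum_mul, Finset.mul_sum]
    congr 1
    exact Finset.sum_congr rfl fun k _ => by ring
  rw [e1, e2, hW5 r]
  linear_combination θ.w (l + 1) r h * hcomb

lemma gTangAll (hl : 1 ≤ l) (hh : h < H l)
    (hsum : ∑ i ∈ Finset.range (K + 1), lam i = 1)
    (hc : GammaCompat H l K h lam dW' dB' dWs dBs) :
    ∀ ℓ, ℓ ≠ l → ∀ i,
      tang g (enlargeH H l K) (gammaEmb H l K h lam θ) x dW' dB' ℓ i =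
        tang g H θ x dWs dBs ℓ i := by
  obtain ⟨hW1, hW2, hW3, hW4, hW5, hB1, hB2, hB3⟩ := hc
  intro ℓ
  induction ℓ with
  | zero => intro _ i; rfl
  | succ ℓ ih =>
      intro hℓ i
      by_cases hℓl : ℓ = l
      · simp only [tang]
        rw [hℓl]
        rw [gammaCollapse g H l K h lam θ x hl hh hsum i,
          gammaB_ne H l K h lam θ (show l + 1 ≠ l from by omega) i,
          gTangCollapse g H l K h lam θ x dW' dWs dB' dBs hl hh hsum
            ⟨hW1, hW2, hW3, hW4, hW5, hB1, hB2, hB3⟩ i,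
          hB1 (l + 1) i (show l + 1 ≠ l from by omega)]
      · simp only [tang]
        rw [enlargeH_ne H l K hℓl,
          gammaB_ne H l K h lam θ hℓ, hB1 (ℓ + 1) i hℓ]
        have hA : ∑ j ∈ Finset.range (H ℓ),
            (gammaEmb H l K h lam θ).w (ℓ + 1) i j *
              layerOut g (enlargeH H l K) (gammaEmb H l K h lam θ) x ℓ j =
            ∑ j ∈ Finset.range (H ℓ), θ.w (ℓ + 1) i j * layerOut g H θ x ℓ j :=
          Finset.sum_congr rfl fun j hj => by
            rw [gammaW_low H l K h lam θ hℓ (show ℓ + 1 ≠ l + 1 from by simpa using hℓl),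
              gammaOut_ne g H l K h lam θ x hl hh hsum ℓ hℓl j]
        have hS : ∑ j ∈ Finset.range (H ℓ),
            (dW' (ℓ + 1) i j * layerOut g (enlargeH H l K) (gammaEmb H l K h lam θ) x ℓ j +
              (gammaEmb H l K h lam θ).w (ℓ + 1) i j *
                tang g (enlargeH H l K) (gammaEmb H l K h lam θ) x dW' dB' ℓ j) =
            ∑ j ∈ Finset.range (H ℓ),
            (dWs (ℓ + 1) i j * layerOut g H θ x ℓ j +
              θ.w (ℓ + 1) i j * tang g H θ x dWs dBs ℓ j) :=
          Finset.sum_congr rfl fun j hj => by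
            rw [hW1 (ℓ + 1) i j hℓ (show ℓ + 1 ≠ l + 1 from by simpa using hℓl),
              gammaW_low H l K h lam θ hℓ (show ℓ + 1 ≠ l + 1 from by simpa using hℓl),
              gammaOut_ne g H l K h lam θ x hl hh hsum ℓ hℓl j, ih hℓl j]
        rw [hA, hS]

lemma gTangPre_high (hl : 1 ≤ l) (hh : h < H l)
    (hsum : ∑ i ∈ Finset.range (K + 1), lam i = 1)
    (hc : GammaCompat H l K h lam dW' dB' dWs dBs)
    (ℓ : ℕ) (hℓ : l + 1 ≤ ℓ) (r : ℕ) :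
    tangPre g (enlargeH H l K) (gammaEmb H l K h lam θ) x dW' dB' ℓ r =
      tangPre g H θ x dWs dBs ℓ r := by
  obtain ⟨hW1, hW2, hW3, hW4, hW5, hB1, hB2, hB3⟩ := hc
  obtain ⟨m, rfl⟩ : ∃ m, ℓ = m + 1 := ⟨ℓ - 1, by omega⟩
  unfold tangPre
  simp only [Nat.add_sub_cancel]
  by_cases hm : m = l
  · rw [hm]
    rw [gTangCollapse g H l K h lam θ x dW' dWs dB' dBs hl hh hsum
        ⟨hW1, hW2, hW3, hW4, hW5, hB1, hB2, hB3⟩ r,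
      hB1 (l + 1) r (show l + 1 ≠ l from by omega)]
  · rw [enlargeH_ne H l K hm, hB1 (m + 1) r (show m + 1 ≠ l from by omega)]
    congr 1
    refine Finset.sum_congr rfl fun j hj => ?_
    rw [hW1 (m + 1) r j (show m + 1 ≠ l from by omega) (show m + 1 ≠ l + 1 from by simpa using hm),
      gammaW_low H l K h lam θ (show m + 1 ≠ l from by omega)
        (show m + 1 ≠ l + 1 from by simpa using hm),
      gammaOut_ne g H l K h lam θ x hl hh hsum m hm j,
      gTangAll g H l K h lam θ x dW' dWs dB' dBs hl hh hsum
        ⟨hW1, hW2, hW3, hW4, hW5, hB1, hB2, hB3⟩ m hm j]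

end GammaTang

lemma gammaGrad (g : ℝ → ℝ) (H : ℕ → ℕ) (L P : ℕ) {m : ℕ} (X Y : ℕ → ℕ → ℝ)
    (loss : (ℕ → ℝ) → (Fin m → ℝ) → ℝ) (l K h : ℕ) (lam : ℕ → ℝ) (θ : NNParams)
    (dW' dWs : ℕ → ℕ → ℕ → ℝ) (dB' dBs : ℕ → ℕ → ℝ)
    (hl : 1 ≤ l) (hL : l + 1 ≤ L) (hh : h < H l)
    (hsum : ∑ i ∈ Finset.range (K + 1), lam i = 1)
    (hc : GammaCompat H l K h lam dW' dB' dWs dBs) :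
    gradTerm g (enlargeH H l K) L P X Y loss (gammaEmb H l K h lam θ) dW' dB' =
      gradTerm g H L P X Y loss θ dWs dBs := by
  unfold gradTerm
  congr 1
  refine Finset.sum_congr rfl fun p _ => ?_
  rw [show (fun r : Fin m => preact g (enlargeH H l K) (gammaEmb H l K h lam θ) (X p) L r) =
      (fun r : Fin m => preact g H θ (X p) L r) from funext fun r =>
    gammaPre_high g H l K h lam θ (X p) hl hh hsum L (by omega) r]
  rw [show (fun r : Fin m =>
      tangPre g (enlargeH H l K) (gammaEmb H l K h lam θ) (X p) dW' dB' L r) =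
      (fun r : Fin m => tangPre g H θ (X p) dWs dBs L r) from funext fun r =>
    gTangPre_high g H l K h lam θ (X p) dW' dWs dB' dBs hl hh hsum hc L (by omega) r]

/-! ### A `γ` step preserves criticality -/

lemma gamma_isCritical (g : ℝ → ℝ) (H : ℕ → ℕ) (L P : ℕ) {m : ℕ} (X Y : ℕ → ℕ → ℝ)
    (loss : (ℕ → ℝ) → (Fin m → ℝ) → ℝ)
    (hg : Differentiable ℝ g)
    (hloss : ∀ y : ℕ → ℝ, Differentiable ℝ (fun z : EuclideanSpace ℝ (Fin m) => loss y z))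
    (l K h : ℕ) (lam : ℕ → ℝ) (θ : NNParams)
    (hl : 1 ≤ l) (hL : l + 1 ≤ L) (hh : h < H l)
    (hsum : ∑ i ∈ Finset.range (K + 1), lam i = 1)
    (hθ : IsCritical g H L P X Y loss θ) :
    IsCritical g (enlargeH H l K) L P X Y loss (gammaEmb H l K h lam θ) := by
  rw [isCritical_iff hg H L P X Y loss hloss θ] at hθ
  obtain ⟨hCW, hCB⟩ := hθ
  rw [isCritical_iff hg (enlargeH H l K) L P X Y loss hloss _]
  constructor
  · intro ℓ₀ j₀ i₀ c1 c2 c3 c4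
    have key : ∀ (c₀ : ℝ) (lt jt it : ℕ), 1 ≤ lt → lt ≤ L → jt < H lt → it < H (lt - 1) →
        GammaCompat H l K h lam (indW ℓ₀ j₀ i₀) zB
          (fun a b d => c₀ * indW lt jt it a b d) (fun a b => c₀ * zB a b) →
        gradTerm g (enlargeH H l K) L P X Y loss (gammaEmb H l K h lam θ)
          (indW ℓ₀ j₀ i₀) zB = 0 := by
      intro c₀ lt jt it v1 v2 v3 v4 hc
      rw [gammaGrad g H L P X Y loss l K h lam θ _ _ _ _ hl hL hh hsum hc,
        gradTerm_smul, hCW lt jt it v1 v2 v3 v4, mul_zero]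
    by_cases hA : ℓ₀ = l
    · subst hA
      rw [enlargeH_eq] at c3
      have c4' : i₀ < H (ℓ₀ - 1) := by
        rwa [enlargeH_ne H ℓ₀ K (show ℓ₀ - 1 ≠ ℓ₀ from by omega)] at c4
      by_cases hB : j₀ < H ℓ₀
      · by_cases hC : j₀ = h
        · subst hC
          refine key (lam 0) ℓ₀ j₀ i₀ hl (by omega) hh c4' ?_
          refine ⟨?_, ?_, ?_, ?_, ?_, fun ℓ j _ => by simp [zB],
            fun j _ _ => by simp [zB], by simp [zB]⟩
          · intro ℓ j i hℓ _; simp [indW, hℓ]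
          · intro j i _ hjh; simp [indW, hjh]
          · intro i
            rw [Finset.sum_eq_zero (fun k hk => by
              simp [indW, show ¬(H ℓ₀ + k = j₀) from by omega])]
            ring
          · intro j i _ _; simp [indW, show ℓ₀ + 1 ≠ ℓ₀ from by omega]
          · intro j; simp [indW, show ℓ₀ + 1 ≠ ℓ₀ from by omega]
        · refine key 1 ℓ₀ j₀ i₀ hl (by omega) hB c4' ?_
          refine ⟨fun ℓ j i _ _ => one_mul _, fun j i _ _ => one_mul _, ?_,
            fun j i _ _ => one_mul _, ?_, fun ℓ j _ => by simp [zB],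
            fun j _ _ => by simp [zB], by simp [zB]⟩
          · intro i
            rw [Finset.sum_eq_zero (fun k hk => by
              simp [indW, show ¬(H ℓ₀ + k = j₀) from by omega])]
            simp [indW, show ¬(h = j₀) from fun hcon => hC hcon.symm]
          · intro j; simp [indW, show ℓ₀ + 1 ≠ ℓ₀ from by omega]
      · obtain ⟨k₀, rfl⟩ : ∃ k₀, j₀ = H ℓ₀ + k₀ := ⟨j₀ - H ℓ₀, by omega⟩
        have hk₀ : k₀ < K := by omega
        refine key (lam (k₀ + 1)) ℓ₀ h i₀ hl (by omega) hh c4' ?_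
        refine ⟨?_, ?_, ?_, ?_, ?_, fun ℓ j _ => by simp [zB],
          fun j _ _ => by simp [zB], by simp [zB]⟩
        · intro ℓ j i hℓ _; simp [indW, hℓ]
        · intro j i hj hjh; simp [indW, hjh, show ¬(j = H ℓ₀ + k₀) from by omega]
        · intro i
          by_cases hi : i = i₀
          · simp [indW, hi, show ¬(h = H ℓ₀ + k₀) from by omega, mul_ite,
              Finset.sum_ite_eq', hk₀]
          · simp [indW, hi]
        · intro j i _ _; simp [indW, show ℓ₀ + 1 ≠ ℓ₀ from by omega]
        · intro j; simp [indW, show ℓ₀ + 1 ≠ ℓ₀ from by omega]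
    · by_cases hA2 : ℓ₀ = l + 1
      · subst hA2
        rw [enlargeH_ne H l K hA] at c3
        simp only [Nat.add_sub_cancel] at c4
        rw [enlargeH_eq] at c4
        by_cases hE : i₀ < H l
        · refine key 1 (l + 1) j₀ i₀ (by omega) c2 c3 (by simpa using hE) ?_
          refine ⟨fun ℓ j i _ _ => one_mul _, ?_, ?_, fun j i _ _ => one_mul _, ?_,
            fun ℓ j _ => by simp [zB], fun j _ _ => by simp [zB], by simp [zB]⟩
          · intro j i _ _; simp [indW, show l ≠ l + 1 from by omega]
          · intro i; simp [indW, show l ≠ l + 1 from by omega]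
          · intro j
            rw [Finset.sum_eq_zero (fun k hk => by
              simp [indW, show ¬(H l + k = i₀) from by omega])]
            ring
        · obtain ⟨k₀, rfl⟩ : ∃ k₀, i₀ = H l + k₀ := ⟨i₀ - H l, by omega⟩
          have hk₀ : k₀ < K := by omega
          refine key 1 (l + 1) j₀ h (by omega) c2 c3 (by simpa using hh) ?_
          refine ⟨?_, ?_, ?_, ?_, ?_, fun ℓ j _ => by simp [zB],
            fun j _ _ => by simp [zB], by simp [zB]⟩
          · intro ℓ j i _ hℓ2; simp [indW, hℓ2]
          · intro j i _ _; simp [indW, show l ≠ l + 1 from by omega]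
          · intro i; simp [indW, show l ≠ l + 1 from by omega]
          · intro j i hi hih; simp [indW, hih, show ¬(i = H l + k₀) from by omega]
          · intro j
            by_cases hj : j = j₀
            · simp [indW, hj, show ¬(h = H l + k₀) from by omega, mul_ite,
                Finset.sum_ite_eq', hk₀]
            · simp [indW, hj]
      · rw [enlargeH_ne H l K hA] at c3
        have c4' : i₀ < H (ℓ₀ - 1) := by
          rwa [enlargeH_ne H l K (show ℓ₀ - 1 ≠ l from by omega)] at c4
        refine key 1 ℓ₀ j₀ i₀ c1 c2 c3 c4' ?_
        refine ⟨fun ℓ j i _ _ => one_mul _, fun j i _ _ => one_mul _, ?_,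
          fun j i _ _ => one_mul _, ?_, fun ℓ j _ => by simp [zB],
          fun j _ _ => by simp [zB], by simp [zB]⟩
        · intro i; simp [indW, Ne.symm hA]
        · intro j; simp [indW, Ne.symm hA2]
  · intro ℓ₀ j₀ c1 c2 c3
    have key2 : ∀ (c₀ : ℝ) (lt jt : ℕ), 1 ≤ lt → lt ≤ L → jt < H lt →
        GammaCompat H l K h lam zW (indB ℓ₀ j₀)
          (fun a b d => c₀ * zW a b d) (fun a b => c₀ * indB lt jt a b) →
        gradTerm g (enlargeH H l K) L P X Y loss (gammaEmb H l K h lam θ)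
          zW (indB ℓ₀ j₀) = 0 := by
      intro c₀ lt jt v1 v2 v3 hc
      rw [gammaGrad g H L P X Y loss l K h lam θ _ _ _ _ hl hL hh hsum hc,
        gradTerm_smul, hCB lt jt v1 v2 v3, mul_zero]
    by_cases hA : ℓ₀ = l
    · subst hA
      rw [enlargeH_eq] at c3
      by_cases hB : j₀ < H ℓ₀
      · by_cases hC : j₀ = h
        · subst hC
          refine key2 (lam 0) ℓ₀ j₀ hl (by omega) hh ?_
          refine ⟨fun ℓ j i _ _ => by simp [zW], fun j i _ _ => by simp [zW],
            fun i => by simp [zW], fun j i _ _ => by simp [zW], fun j => by simp [zW],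
            ?_, ?_, ?_⟩
          · intro ℓ j hℓ; simp [indB, hℓ]
          · intro j _ hjh; simp [indB, hjh]
          · rw [Finset.sum_eq_zero (fun k hk => by
              simp [indB, show ¬(H ℓ₀ + k = j₀) from by omega])]
            ring
        · refine key2 1 ℓ₀ j₀ hl (by omega) hB ?_
          refine ⟨fun ℓ j i _ _ => by simp [zW], fun j i _ _ => by simp [zW],
            fun i => by simp [zW], fun j i _ _ => by simp [zW], fun j => by simp [zW],
            fun ℓ j _ => one_mul _, fun j _ _ => one_mul _, ?_⟩
          · rw [Finset.sum_eq_zero (fun k hk => by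
              simp [indB, show ¬(H ℓ₀ + k = j₀) from by omega])]
            simp [indB, show ¬(h = j₀) from fun hcon => hC hcon.symm]
      · obtain ⟨k₀, rfl⟩ : ∃ k₀, j₀ = H ℓ₀ + k₀ := ⟨j₀ - H ℓ₀, by omega⟩
        have hk₀ : k₀ < K := by omega
        refine key2 (lam (k₀ + 1)) ℓ₀ h hl (by omega) hh ?_
        refine ⟨fun ℓ j i _ _ => by simp [zW], fun j i _ _ => by simp [zW],
          fun i => by simp [zW], fun j i _ _ => by simp [zW], fun j => by simp [zW],
          ?_, ?_, ?_⟩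
        · intro ℓ j hℓ; simp [indB, hℓ]
        · intro j hj hjh; simp [indB, hjh, show ¬(j = H ℓ₀ + k₀) from by omega]
        · simp [indB, show ¬(h = H ℓ₀ + k₀) from by omega, mul_ite,
            Finset.sum_ite_eq', hk₀]
    · rw [enlargeH_ne H l K hA] at c3
      refine key2 1 ℓ₀ j₀ c1 c2 c3 ?_
      refine ⟨fun ℓ j i _ _ => by simp [zW], fun j i _ _ => by simp [zW],
        fun i => by simp [zW], fun j i _ _ => by simp [zW], fun j => by simp [zW],
        fun ℓ j _ => one_mul _, fun j _ _ => one_mul _, ?_⟩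
      · simp [indB, Ne.symm hA]

/-! ### Entry lemmas for `betaEmb` with zero outgoing weights -/

section BetaEntries
variable (g : ℝ → ℝ) (H : ℕ → ℕ) (l K : ℕ) (ζ : ℕ → ℝ) (θ : NNParams)

lemma betaW_low {ℓ : ℕ} (h1 : ℓ ≠ l) (h2 : ℓ ≠ l + 1) (j i : ℕ) :
    (betaEmb g H l K ζ (fun _ _ => 0) θ).w ℓ j i = θ.w ℓ j i := by
  simp [betaEmb, h1, h2]

lemma betaW_lrow {j : ℕ} (hj : j < H l) (i : ℕ) :
    (betaEmb g H l K ζ (fun _ _ => 0) θ).w l j i = θ.w l j i := by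
  simp [betaEmb, not_le.mpr hj, show l ≠ l + 1 from by omega]

lemma betaW_lnew (k i : ℕ) :
    (betaEmb g H l K ζ (fun _ _ => 0) θ).w l (H l + k) i = 0 := by
  simp [betaEmb, Nat.le_add_right]

lemma betaW_l1 {i : ℕ} (hi : i < H l) (j : ℕ) :
    (betaEmb g H l K ζ (fun _ _ => 0) θ).w (l + 1) j i = θ.w (l + 1) j i := by
  simp [betaEmb, not_le.mpr hi, show l + 1 ≠ l from by omega]

lemma betaW_l1new (j k : ℕ) :
    (betaEmb g H l K ζ (fun _ _ => 0) θ).w (l + 1) j (H l + k) = 0 := by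
  simp [betaEmb, show l + 1 ≠ l from by omega, Nat.le_add_right]

lemma betaB_ne {ℓ : ℕ} (h1 : ℓ ≠ l) (h2 : ℓ ≠ l + 1) (j : ℕ) :
    (betaEmb g H l K ζ (fun _ _ => 0) θ).b ℓ j = θ.b ℓ j := by
  simp [betaEmb, h1, h2]

lemma betaB_lrow {j : ℕ} (hj : j < H l) :
    (betaEmb g H l K ζ (fun _ _ => 0) θ).b l j = θ.b l j := by
  simp [betaEmb, not_le.mpr hj, show l ≠ l + 1 from by omega]

lemma betaB_lnew (k : ℕ) :
    (betaEmb g H l K ζ (fun _ _ => 0) θ).b l (H l + k) = ζ k := by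
  simp [betaEmb, Nat.le_add_right]

lemma betaB_l1 (j : ℕ) :
    (betaEmb g H l K ζ (fun _ _ => 0) θ).b (l + 1) j = θ.b (l + 1) j := by
  simp [betaEmb, show l + 1 ≠ l from by omega]

end BetaEntries

/-! ### Forward pass through a `β` embedding -/

section BetaForward
variable (g : ℝ → ℝ) (H : ℕ → ℕ) (l K : ℕ) (ζ : ℕ → ℝ) (θ : NNParams) (x : ℕ → ℝ)

lemma betaLow (hl : 1 ≤ l) :
    ∀ ℓ, ℓ < l → ∀ i, layerOut g (enlargeH H l K) (betaEmb g H l K ζ (fun _ _ => 0) θ) x ℓ i =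
      layerOut g H θ x ℓ i := by
  intro ℓ
  induction ℓ with
  | zero => intro _ i; rfl
  | succ ℓ ih =>
      intro hℓ i
      simp only [layerOut]
      congr 1
      rw [enlargeH_ne H l K (show ℓ ≠ l from by omega),
        betaB_ne g H l K ζ θ (show ℓ + 1 ≠ l from by omega) (show ℓ + 1 ≠ l + 1 from by omega)]
      congr 1
      exact Finset.sum_congr rfl fun j hj => by
        rw [betaW_low g H l K ζ θ (show ℓ + 1 ≠ l from by omega)
          (show ℓ + 1 ≠ l + 1 from by omega), ih (by omega) j]

lemma betaPre_l_old (hl : 1 ≤ l) {i : ℕ} (hi : i < H l) :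
    preact g (enlargeH H l K) (betaEmb g H l K ζ (fun _ _ => 0) θ) x l i =
      preact g H θ x l i := by
  unfold preact
  rw [enlargeH_ne H l K (show l - 1 ≠ l from by omega), betaB_lrow g H l K ζ θ hi]
  congr 1
  exact Finset.sum_congr rfl fun j hj => by
    rw [betaW_lrow g H l K ζ θ hi j, betaLow g H l K ζ θ x hl (l - 1) (by omega) j]

lemma betaOut_l_old (hl : 1 ≤ l) {i : ℕ} (hi : i < H l) :
    layerOut g (enlargeH H l K) (betaEmb g H l K ζ (fun _ _ => 0) θ) x l i =
      layerOut g H θ x l i := by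
  rw [layerOut_eq_g_preact _ _ _ _ hl, layerOut_eq_g_preact _ _ _ _ hl,
    betaPre_l_old g H l K ζ θ x hl hi]

lemma betaOut_l_new (hl : 1 ≤ l) (k : ℕ) :
    layerOut g (enlargeH H l K) (betaEmb g H l K ζ (fun _ _ => 0) θ) x l (H l + k) =
      g (ζ k) := by
  rw [layerOut_eq_g_preact _ _ _ _ hl]
  congr 1
  unfold preact
  rw [betaB_lnew g H l K ζ θ k, Finset.sum_eq_zero, zero_add]
  intro j hj
  rw [betaW_lnew g H l K ζ θ k j, zero_mul]

lemma betaCollapse (hl : 1 ≤ l) (r : ℕ) :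
    ∑ j ∈ Finset.range (enlargeH H l K l),
        (betaEmb g H l K ζ (fun _ _ => 0) θ).w (l + 1) r j *
          layerOut g (enlargeH H l K) (betaEmb g H l K ζ (fun _ _ => 0) θ) x l j =
      ∑ j ∈ Finset.range (H l), θ.w (l + 1) r j * layerOut g H θ x l j := by
  rw [enlargeH_eq, sum_range_add']
  rw [Finset.sum_eq_zero (fun k (_ : k ∈ Finset.range K) => by
    rw [betaW_l1new g H l K ζ θ r k, zero_mul]), add_zero]
  exact Finset.sum_congr rfl fun j hj => by
    rw [betaW_l1 g H l K ζ θ (Finset.mem_range.mp hj) r,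
      betaOut_l_old g H l K ζ θ x hl (Finset.mem_range.mp hj)]

lemma betaOut_ne (hl : 1 ≤ l) :
    ∀ ℓ, ℓ ≠ l → ∀ i, layerOut g (enlargeH H l K) (betaEmb g H l K ζ (fun _ _ => 0) θ) x ℓ i =
      layerOut g H θ x ℓ i := by
  intro ℓ
  induction ℓ with
  | zero => intro _ i; rfl
  | succ ℓ ih =>
      intro hℓ i
      by_cases hℓl : ℓ = l
      · simp only [layerOut]
        rw [hℓl]
        congr 1
        rw [betaCollapse g H l K ζ θ x hl i, betaB_l1 g H l K ζ θ i]
      · simp only [layerOut]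
        congr 1
        rw [enlargeH_ne H l K hℓl,
          betaB_ne g H l K ζ θ hℓ (show ℓ + 1 ≠ l + 1 from by simpa using hℓl)]
        congr 1
        exact Finset.sum_congr rfl fun j hj => by
          rw [betaW_low g H l K ζ θ hℓ (show ℓ + 1 ≠ l + 1 from by simpa using hℓl), ih hℓl j]

lemma betaPre_high (hl : 1 ≤ l) (ℓ : ℕ) (hℓ : l + 1 ≤ ℓ) (r : ℕ) :
    preact g (enlargeH H l K) (betaEmb g H l K ζ (fun _ _ => 0) θ) x ℓ r =
      preact g H θ x ℓ r := by
  obtain ⟨m, rfl⟩ : ∃ m, ℓ = m + 1 := ⟨ℓ - 1, by omega⟩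
  unfold preact
  simp only [Nat.add_sub_cancel]
  by_cases hm : m = l
  · rw [hm]
    rw [betaCollapse g H l K ζ θ x hl r, betaB_l1 g H l K ζ θ r]
  · rw [enlargeH_ne H l K hm,
      betaB_ne g H l K ζ θ (show m + 1 ≠ l from by omega)
        (show m + 1 ≠ l + 1 from by simpa using hm)]
    congr 1
    exact Finset.sum_congr rfl fun j hj => by
      rw [betaW_low g H l K ζ θ (show m + 1 ≠ l from by omega)
        (show m + 1 ≠ l + 1 from by simpa using hm),
        betaOut_ne g H l K ζ θ x hl m hm j]

end BetaForward

/-! ### Tangent transfer through a `β` embedding -/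

def BetaCompat (g : ℝ → ℝ) (H : ℕ → ℕ) (l K : ℕ) (ζ : ℕ → ℝ)
    (dW' : ℕ → ℕ → ℕ → ℝ) (dB' : ℕ → ℕ → ℝ)
    (dWs : ℕ → ℕ → ℕ → ℝ) (dBs : ℕ → ℕ → ℝ) : Prop :=
  (∀ ℓ j i, ℓ ≠ l → ℓ ≠ l + 1 → dWs ℓ j i = dW' ℓ j i) ∧
  (∀ j i, j < H l → dWs l j i = dW' l j i) ∧
  (∀ j i, i < H l → dWs (l + 1) j i = dW' (l + 1) j i) ∧
  (∀ ℓ j, ℓ ≠ l → ℓ ≠ l + 1 → dBs ℓ j = dB' ℓ j) ∧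
  (∀ j, j < H l → dBs l j = dB' l j) ∧
  (∀ j, dBs (l + 1) j = dB' (l + 1) j + ∑ k ∈ Finset.range K, dW' (l + 1) j (H l + k) * g (ζ k))

section BetaTang
variable (g : ℝ → ℝ) (H : ℕ → ℕ) (l K : ℕ) (ζ : ℕ → ℝ) (θ : NNParams) (x : ℕ → ℝ)
  (dW' dWs : ℕ → ℕ → ℕ → ℝ) (dB' dBs : ℕ → ℕ → ℝ)

lemma bTangLow (hl : 1 ≤ l) (hc : BetaCompat g H l K ζ dW' dB' dWs dBs) :
    ∀ ℓ, ℓ < l → ∀ i,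
      tang g (enlargeH H l K) (betaEmb g H l K ζ (fun _ _ => 0) θ) x dW' dB' ℓ i =
        tang g H θ x dWs dBs ℓ i := by
  obtain ⟨hW1, hW2, hW4, hB1, hB2, hB4⟩ := hc
  intro ℓ
  induction ℓ with
  | zero => intro _ i; rfl
  | succ ℓ ih =>
      intro hℓ i
      simp only [tang]
      rw [enlargeH_ne H l K (show ℓ ≠ l from by omega),
        betaB_ne g H l K ζ θ (show ℓ + 1 ≠ l from by omega) (show ℓ + 1 ≠ l + 1 from by omega),
        hB1 (ℓ + 1) i (show ℓ + 1 ≠ l from by omega) (show ℓ + 1 ≠ l + 1 from by omega)]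
      have hA : ∑ j ∈ Finset.range (H ℓ),
          (betaEmb g H l K ζ (fun _ _ => 0) θ).w (ℓ + 1) i j *
            layerOut g (enlargeH H l K) (betaEmb g H l K ζ (fun _ _ => 0) θ) x ℓ j =
          ∑ j ∈ Finset.range (H ℓ), θ.w (ℓ + 1) i j * layerOut g H θ x ℓ j :=
        Finset.sum_congr rfl fun j hj => by
          rw [betaW_low g H l K ζ θ (show ℓ + 1 ≠ l from by omega)
            (show ℓ + 1 ≠ l + 1 from by omega),
            betaLow g H l K ζ θ x hl ℓ (by omega) j]
      have hS : ∑ j ∈ Finset.range (H ℓ),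
          (dW' (ℓ + 1) i j *
              layerOut g (enlargeH H l K) (betaEmb g H l K ζ (fun _ _ => 0) θ) x ℓ j +
            (betaEmb g H l K ζ (fun _ _ => 0) θ).w (ℓ + 1) i j *
              tang g (enlargeH H l K) (betaEmb g H l K ζ (fun _ _ => 0) θ) x dW' dB' ℓ j) =
          ∑ j ∈ Finset.range (H ℓ),
          (dWs (ℓ + 1) i j * layerOut g H θ x ℓ j +
            θ.w (ℓ + 1) i j * tang g H θ x dWs dBs ℓ j) :=
        Finset.sum_congr rfl fun j hj => by
          rw [hW1 (ℓ + 1) i j (show ℓ + 1 ≠ l from by omega) (show ℓ + 1 ≠ l + 1 from by omega),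
            betaW_low g H l K ζ θ (show ℓ + 1 ≠ l from by omega)
              (show ℓ + 1 ≠ l + 1 from by omega),
            betaLow g H l K ζ θ x hl ℓ (by omega) j, ih (by omega) j]
      rw [hA, hS]

lemma bTang_l_old (hl : 1 ≤ l) (hc : BetaCompat g H l K ζ dW' dB' dWs dBs)
    {i : ℕ} (hi : i < H l) :
    tang g (enlargeH H l K) (betaEmb g H l K ζ (fun _ _ => 0) θ) x dW' dB' l i =
      tang g H θ x dWs dBs l i := by
  obtain ⟨hW1, hW2, hW4, hB1, hB2, hB4⟩ := hc
  rw [tang_eq_mul g _ _ x dW' dB' hl i, tang_eq_mul g H θ x dWs dBs hl i,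
    betaPre_l_old g H l K ζ θ x hl hi]
  congr 1
  unfold tangPre
  rw [enlargeH_ne H l K (show l - 1 ≠ l from by omega), hB2 i hi]
  congr 1
  refine Finset.sum_congr rfl fun j hj => ?_
  rw [hW2 i j hi, betaW_lrow g H l K ζ θ hi j,
    betaLow g H l K ζ θ x hl (l - 1) (by omega) j,
    bTangLow g H l K ζ θ x dW' dWs dB' dBs hl
      ⟨hW1, hW2, hW4, hB1, hB2, hB4⟩ (l - 1) (by omega) j]

lemma bTangPre_l1 (hl : 1 ≤ l) (hc : BetaCompat g H l K ζ dW' dB' dWs dBs) (r : ℕ) :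
    tangPre g (enlargeH H l K) (betaEmb g H l K ζ (fun _ _ => 0) θ) x dW' dB' (l + 1) r =
      tangPre g H θ x dWs dBs (l + 1) r := by
  obtain ⟨hW1, hW2, hW4, hB1, hB2, hB4⟩ := hc
  unfold tangPre
  simp only [Nat.add_sub_cancel]
  rw [enlargeH_eq, sum_range_add']
  rw [Finset.sum_congr rfl (fun k (_ : k ∈ Finset.range K) => by
    rw [betaW_l1new g H l K ζ θ r k, zero_mul, add_zero,
      betaOut_l_new g H l K ζ θ x hl k])]
  have hOld : ∑ i ∈ Finset.range (H l),
      (dW' (l + 1) r i *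
          layerOut g (enlargeH H l K) (betaEmb g H l K ζ (fun _ _ => 0) θ) x l i +
        (betaEmb g H l K ζ (fun _ _ => 0) θ).w (l + 1) r i *
          tang g (enlargeH H l K) (betaEmb g H l K ζ (fun _ _ => 0) θ) x dW' dB' l i) =
      ∑ i ∈ Finset.range (H l),
      (dWs (l + 1) r i * layerOut g H θ x l i +
        θ.w (l + 1) r i * tang g H θ x dWs dBs l i) :=
    Finset.sum_congr rfl fun i hi => by
      rw [hW4 r i (Finset.mem_range.mp hi), betaW_l1 g H l K ζ θ (Finset.mem_range.mp hi) r,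
        betaOut_l_old g H l K ζ θ x hl (Finset.mem_range.mp hi),
        bTang_l_old g H l K ζ θ x dW' dWs dB' dBs hl
          ⟨hW1, hW2, hW4, hB1, hB2, hB4⟩ (Finset.mem_range.mp hi)]
  rw [hOld, hB4 r]
  ring

lemma bTangAll (hl : 1 ≤ l) (hc : BetaCompat g H l K ζ dW' dB' dWs dBs) :
    ∀ ℓ, ℓ ≠ l → ∀ i,
      tang g (enlargeH H l K) (betaEmb g H l K ζ (fun _ _ => 0) θ) x dW' dB' ℓ i =
        tang g H θ x dWs dBs ℓ i := by
  obtain ⟨hW1, hW2, hW4, hB1, hB2, hB4⟩ := hc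
  intro ℓ
  induction ℓ with
  | zero => intro _ i; rfl
  | succ ℓ ih =>
      intro hℓ i
      by_cases hℓl : ℓ = l
      · rw [tang_succ g (enlargeH H l K) (betaEmb g H l K ζ (fun _ _ => 0) θ) x dW' dB' ℓ i,
          tang_succ g H θ x dWs dBs ℓ i, hℓl,
          betaPre_high g H l K ζ θ x hl (l + 1) (by omega) i,
          bTangPre_l1 g H l K ζ θ x dW' dWs dB' dBs hl
            ⟨hW1, hW2, hW4, hB1, hB2, hB4⟩ i]
      · simp only [tang]
        rw [enlargeH_ne H l K hℓl,
          betaB_ne g H l K ζ θ hℓ (show ℓ + 1 ≠ l + 1 from by simpa using hℓl),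
          hB1 (ℓ + 1) i hℓ (show ℓ + 1 ≠ l + 1 from by simpa using hℓl)]
        have hA : ∑ j ∈ Finset.range (H ℓ),
            (betaEmb g H l K ζ (fun _ _ => 0) θ).w (ℓ + 1) i j *
              layerOut g (enlargeH H l K) (betaEmb g H l K ζ (fun _ _ => 0) θ) x ℓ j =
            ∑ j ∈ Finset.range (H ℓ), θ.w (ℓ + 1) i j * layerOut g H θ x ℓ j :=
          Finset.sum_congr rfl fun j hj => by
            rw [betaW_low g H l K ζ θ hℓ (show ℓ + 1 ≠ l + 1 from by simpa using hℓl),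
              betaOut_ne g H l K ζ θ x hl ℓ hℓl j]
        have hS : ∑ j ∈ Finset.range (H ℓ),
            (dW' (ℓ + 1) i j *
                layerOut g (enlargeH H l K) (betaEmb g H l K ζ (fun _ _ => 0) θ) x ℓ j +
              (betaEmb g H l K ζ (fun _ _ => 0) θ).w (ℓ + 1) i j *
                tang g (enlargeH H l K) (betaEmb g H l K ζ (fun _ _ => 0) θ) x dW' dB' ℓ j) =
            ∑ j ∈ Finset.range (H ℓ),
            (dWs (ℓ + 1) i j * layerOut g H θ x ℓ j +
              θ.w (ℓ + 1) i j * tang g H θ x dWs dBs ℓ j) :=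
          Finset.sum_congr rfl fun j hj => by
            rw [hW1 (ℓ + 1) i j hℓ (show ℓ + 1 ≠ l + 1 from by simpa using hℓl),
              betaW_low g H l K ζ θ hℓ (show ℓ + 1 ≠ l + 1 from by simpa using hℓl),
              betaOut_ne g H l K ζ θ x hl ℓ hℓl j, ih hℓl j]
        rw [hA, hS]

lemma bTangPre_high (hl : 1 ≤ l) (hc : BetaCompat g H l K ζ dW' dB' dWs dBs)
    (ℓ : ℕ) (hℓ : l + 1 ≤ ℓ) (r : ℕ) :
    tangPre g (enlargeH H l K) (betaEmb g H l K ζ (fun _ _ => 0) θ) x dW' dB' ℓ r =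
      tangPre g H θ x dWs dBs ℓ r := by
  obtain ⟨hW1, hW2, hW4, hB1, hB2, hB4⟩ := hc
  by_cases hm : ℓ = l + 1
  · rw [hm]
    exact bTangPre_l1 g H l K ζ θ x dW' dWs dB' dBs hl ⟨hW1, hW2, hW4, hB1, hB2, hB4⟩ r
  · obtain ⟨m, rfl⟩ : ∃ m, ℓ = m + 1 := ⟨ℓ - 1, by omega⟩
    unfold tangPre
    simp only [Nat.add_sub_cancel]
    rw [enlargeH_ne H l K (show m ≠ l from by omega),
      hB1 (m + 1) r (show m + 1 ≠ l from by omega) (show m + 1 ≠ l + 1 from by omega)]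
    congr 1
    refine Finset.sum_congr rfl fun j hj => ?_
    rw [hW1 (m + 1) r j (show m + 1 ≠ l from by omega) (show m + 1 ≠ l + 1 from by omega),
      betaW_low g H l K ζ θ (show m + 1 ≠ l from by omega) (show m + 1 ≠ l + 1 from by omega),
      betaOut_ne g H l K ζ θ x hl m (show m ≠ l from by omega) j,
      bTangAll g H l K ζ θ x dW' dWs dB' dBs hl
        ⟨hW1, hW2, hW4, hB1, hB2, hB4⟩ m (show m ≠ l from by omega) j]

end BetaTang

lemma betaGrad (g : ℝ → ℝ) (H : ℕ → ℕ) (L P : ℕ) {m : ℕ} (X Y : ℕ → ℕ → ℝ)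
    (loss : (ℕ → ℝ) → (Fin m → ℝ) → ℝ) (l K : ℕ) (ζ : ℕ → ℝ) (θ : NNParams)
    (dW' dWs : ℕ → ℕ → ℕ → ℝ) (dB' dBs : ℕ → ℕ → ℝ)
    (hl : 1 ≤ l) (hL : l + 1 ≤ L)
    (hc : BetaCompat g H l K ζ dW' dB' dWs dBs) :
    gradTerm g (enlargeH H l K) L P X Y loss (betaEmb g H l K ζ (fun _ _ => 0) θ) dW' dB' =
      gradTerm g H L P X Y loss θ dWs dBs := by
  unfold gradTerm
  congr 1
  refine Finset.sum_congr rfl fun p _ => ?_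
  rw [show (fun r : Fin m =>
      preact g (enlargeH H l K) (betaEmb g H l K ζ (fun _ _ => 0) θ) (X p) L r) =
      (fun r : Fin m => preact g H θ (X p) L r) from funext fun r =>
    betaPre_high g H l K ζ θ (X p) hl L (by omega) r]
  rw [show (fun r : Fin m =>
      tangPre g (enlargeH H l K) (betaEmb g H l K ζ (fun _ _ => 0) θ) (X p) dW' dB' L r) =
      (fun r : Fin m => tangPre g H θ (X p) dWs dBs L r) from funext fun r =>
    bTangPre_high g H l K ζ θ (X p) dW' dWs dB' dBs hl hc L (by omega) r]

/-! ### A `β` step (with zero outgoing weights) preserves criticality -/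

lemma beta_isCritical (g : ℝ → ℝ) (H : ℕ → ℕ) (L P : ℕ) {m : ℕ} (X Y : ℕ → ℕ → ℝ)
    (loss : (ℕ → ℝ) → (Fin m → ℝ) → ℝ)
    (hg : Differentiable ℝ g)
    (hloss : ∀ y : ℕ → ℝ, Differentiable ℝ (fun z : EuclideanSpace ℝ (Fin m) => loss y z))
    (l K : ℕ) (ζ : ℕ → ℝ) (θ : NNParams)
    (hl : 1 ≤ l) (hL : l + 1 ≤ L)
    (hθ : IsCritical g H L P X Y loss θ) :
    IsCritical g (enlargeH H l K) L P X Y loss (betaEmb g H l K ζ (fun _ _ => 0) θ) := by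
  rw [isCritical_iff hg H L P X Y loss hloss θ] at hθ
  obtain ⟨hCW, hCB⟩ := hθ
  rw [isCritical_iff hg (enlargeH H l K) L P X Y loss hloss _]
  constructor
  · intro ℓ₀ j₀ i₀ c1 c2 c3 c4
    have key : ∀ (c₀ : ℝ) (lt jt it : ℕ), 1 ≤ lt → lt ≤ L → jt < H lt → it < H (lt - 1) →
        BetaCompat g H l K ζ (indW ℓ₀ j₀ i₀) zB
          (fun a b d => c₀ * indW lt jt it a b d) (fun a b => c₀ * zB a b) →
        gradTerm g (enlargeH H l K) L P X Y loss (betaEmb g H l K ζ (fun _ _ => 0) θ)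
          (indW ℓ₀ j₀ i₀) zB = 0 := by
      intro c₀ lt jt it v1 v2 v3 v4 hc
      rw [betaGrad g H L P X Y loss l K ζ θ _ _ _ _ hl hL hc,
        gradTerm_smul, hCW lt jt it v1 v2 v3 v4, mul_zero]
    have keyE : ∀ (c₀ : ℝ) (lt jt : ℕ), 1 ≤ lt → lt ≤ L → jt < H lt →
        BetaCompat g H l K ζ (indW ℓ₀ j₀ i₀) zB
          (fun a b d => c₀ * zW a b d) (fun a b => c₀ * indB lt jt a b) →
        gradTerm g (enlargeH H l K) L P X Y loss (betaEmb g H l K ζ (fun _ _ => 0) θ)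
          (indW ℓ₀ j₀ i₀) zB = 0 := by
      intro c₀ lt jt v1 v2 v3 hc
      rw [betaGrad g H L P X Y loss l K ζ θ _ _ _ _ hl hL hc,
        gradTerm_smul, hCB lt jt v1 v2 v3, mul_zero]
    have key0 : BetaCompat g H l K ζ (indW ℓ₀ j₀ i₀) zB zW zB →
        gradTerm g (enlargeH H l K) L P X Y loss (betaEmb g H l K ζ (fun _ _ => 0) θ)
          (indW ℓ₀ j₀ i₀) zB = 0 := by
      intro hc
      rw [betaGrad g H L P X Y loss l K ζ θ _ _ _ _ hl hL hc, gradTerm_zero]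
    by_cases hA : ℓ₀ = l
    · subst hA
      rw [enlargeH_eq] at c3
      have c4' : i₀ < H (ℓ₀ - 1) := by
        rwa [enlargeH_ne H ℓ₀ K (show ℓ₀ - 1 ≠ ℓ₀ from by omega)] at c4
      by_cases hB : j₀ < H ℓ₀
      · refine key 1 ℓ₀ j₀ i₀ hl (by omega) hB c4' ?_
        refine ⟨fun ℓ j i _ _ => one_mul _, fun j i _ => one_mul _, fun j i _ => one_mul _,
          fun ℓ j _ _ => by simp [zB], fun j _ => by simp [zB], ?_⟩
        · intro j; simp [indW, zB, show ℓ₀ + 1 ≠ ℓ₀ from by omega]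
      · obtain ⟨k₀, rfl⟩ : ∃ k₀, j₀ = H ℓ₀ + k₀ := ⟨j₀ - H ℓ₀, by omega⟩
        refine key0 ?_
        refine ⟨?_, ?_, ?_, fun ℓ j _ _ => by simp [zB], fun j _ => by simp [zB], ?_⟩
        · intro ℓ j i hℓ1 _; simp [indW, zW, hℓ1]
        · intro j i hj; simp [indW, zW, show ¬(j = H ℓ₀ + k₀) from by omega]
        · intro j i _; simp [indW, zW, show ℓ₀ + 1 ≠ ℓ₀ from by omega]
        · intro j; simp [indW, zB, zW, show ℓ₀ + 1 ≠ ℓ₀ from by omega]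
    · by_cases hA2 : ℓ₀ = l + 1
      · subst hA2
        rw [enlargeH_ne H l K hA] at c3
        simp only [Nat.add_sub_cancel] at c4
        rw [enlargeH_eq] at c4
        by_cases hE : i₀ < H l
        · refine key 1 (l + 1) j₀ i₀ (by omega) c2 c3 (by simpa using hE) ?_
          refine ⟨fun ℓ j i _ _ => one_mul _, fun j i _ => one_mul _, fun j i _ => one_mul _,
            fun ℓ j _ _ => by simp [zB], fun j _ => by simp [zB], ?_⟩
          · intro j
            rw [Finset.sum_eq_zero (fun k hk => by
              simp [indW, show ¬(H l + k = i₀) from by omega])]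
            simp [zB]
        · obtain ⟨k₀, rfl⟩ : ∃ k₀, i₀ = H l + k₀ := ⟨i₀ - H l, by omega⟩
          have hk₀ : k₀ < K := by omega
          refine keyE (g (ζ k₀)) (l + 1) j₀ (by omega) c2 c3 ?_
          refine ⟨?_, ?_, ?_, ?_, ?_, ?_⟩
          · intro ℓ j i _ hℓ2; simp [indW, zW, hℓ2]
          · intro j i _; simp [indW, zW, show l ≠ l + 1 from by omega]
          · intro j i hi; simp [indW, zW, hi.ne, show ¬(i = H l + k₀) from by omega]
          · intro ℓ j _ hℓ2; simp [indB, zB, hℓ2]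
          · intro j _; simp [indB, zB, show l ≠ l + 1 from by omega]
          · intro j
            by_cases hj : j = j₀
            · simp [indB, indW, zB, hj, ite_mul, Finset.sum_ite_eq', hk₀]
            · simp [indB, indW, zB, hj]
      · rw [enlargeH_ne H l K hA] at c3
        have c4' : i₀ < H (ℓ₀ - 1) := by
          rwa [enlargeH_ne H l K (show ℓ₀ - 1 ≠ l from by omega)] at c4
        refine key 1 ℓ₀ j₀ i₀ c1 c2 c3 c4' ?_
        refine ⟨fun ℓ j i _ _ => one_mul _, fun j i _ => one_mul _, fun j i _ => one_mul _,
          fun ℓ j _ _ => by simp [zB], fun j _ => by simp [zB], ?_⟩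
        · intro j; simp [indW, zB, Ne.symm hA2]
  · intro ℓ₀ j₀ c1 c2 c3
    have key2 : ∀ (c₀ : ℝ) (lt jt : ℕ), 1 ≤ lt → lt ≤ L → jt < H lt →
        BetaCompat g H l K ζ zW (indB ℓ₀ j₀)
          (fun a b d => c₀ * zW a b d) (fun a b => c₀ * indB lt jt a b) →
        gradTerm g (enlargeH H l K) L P X Y loss (betaEmb g H l K ζ (fun _ _ => 0) θ)
          zW (indB ℓ₀ j₀) = 0 := by
      intro c₀ lt jt v1 v2 v3 hc
      rw [betaGrad g H L P X Y loss l K ζ θ _ _ _ _ hl hL hc,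
        gradTerm_smul, hCB lt jt v1 v2 v3, mul_zero]
    have key0 : BetaCompat g H l K ζ zW (indB ℓ₀ j₀) zW zB →
        gradTerm g (enlargeH H l K) L P X Y loss (betaEmb g H l K ζ (fun _ _ => 0) θ)
          zW (indB ℓ₀ j₀) = 0 := by
      intro hc
      rw [betaGrad g H L P X Y loss l K ζ θ _ _ _ _ hl hL hc, gradTerm_zero]
    by_cases hA : ℓ₀ = l
    · subst hA
      rw [enlargeH_eq] at c3
      by_cases hB : j₀ < H ℓ₀
      · refine key2 1 ℓ₀ j₀ hl (by omega) hB ?_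
        refine ⟨fun ℓ j i _ _ => by simp [zW], fun j i _ => by simp [zW],
          fun j i _ => by simp [zW], fun ℓ j _ _ => one_mul _, fun j _ => one_mul _, ?_⟩
        · intro j; simp [indB, zW]
      · obtain ⟨k₀, rfl⟩ : ∃ k₀, j₀ = H ℓ₀ + k₀ := ⟨j₀ - H ℓ₀, by omega⟩
        refine key0 ?_
        refine ⟨fun ℓ j i _ _ => by simp [zW], fun j i _ => by simp [zW],
          fun j i _ => by simp [zW], ?_, ?_, ?_⟩
        · intro ℓ j hℓ1 _; simp [indB, zB, hℓ1]
        · intro j hj; simp [indB, zB, show ¬(j = H ℓ₀ + k₀) from by omega]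
        · intro j; simp [indB, zB, zW, show ℓ₀ + 1 ≠ ℓ₀ from by omega]
    · rw [enlargeH_ne H l K hA] at c3
      refine key2 1 ℓ₀ j₀ c1 c2 c3 ?_
      refine ⟨fun ℓ j i _ _ => by simp [zW], fun j i _ => by simp [zW],
        fun j i _ => by simp [zW], fun ℓ j _ _ => one_mul _, fun j _ => one_mul _, ?_⟩
      · intro j; simp [indB, zW]

/-! ### Iterating steps -/

lemma steps_isCritical (g : ℝ → ℝ) (L P : ℕ) {m : ℕ} (X Y : ℕ → ℕ → ℝ)
    (loss : (ℕ → ℝ) → (Fin m → ℝ) → ℝ)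
    (hg : Differentiable ℝ g)
    (hloss : ∀ y : ℕ → ℝ, Differentiable ℝ (fun z : EuclideanSpace ℝ (Fin m) => loss y z)) :
    ∀ (steps : List EmbStep) (H : ℕ → ℕ) (θ : NNParams),
      (steps.map EmbStep.layer).Nodup → (∀ st ∈ steps, EmbStep.OK H L st) →
      IsCritical g H L P X Y loss θ →
      IsCritical g (stepsH H steps) L P X Y loss (applySteps g H steps θ) := by
  intro steps
  induction steps with
  | nil => intro H θ _ _ hθ; exact hθ
  | cons st rest ih =>
      intro H θ hnd hOK hθ
      have hnd' : ((st :: rest).map EmbStep.layer).Nodup := hnd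
      rw [List.map_cons, List.nodup_cons] at hnd'
      obtain ⟨hne, hndr⟩ := hnd'
      show IsCritical g (stepsH (enlargeH H st.layer st.count) rest) L P X Y loss
        (applySteps g (enlargeH H st.layer st.count) rest (EmbStep.apply g H θ st))
      refine ih (enlargeH H st.layer st.count) (EmbStep.apply g H θ st) hndr ?_ ?_
      · intro st' hst'
        have h0 := hOK st' (List.mem_cons_of_mem st hst')
        have hlay : st'.layer ≠ st.layer := by
          intro e
          exact hne (e ▸ List.mem_map_of_mem (f := EmbStep.layer) hst')
        cases st' with
        | beta l' K' ζ' => exact h0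
        | gamma l' K' h' lam' =>
            obtain ⟨s1, s2, s3, s4⟩ := h0
            exact ⟨s1, s2, by
              rw [enlargeH_ne H st.layer st.count (show l' ≠ st.layer from hlay)]
              exact s3, s4⟩
      · cases st with
        | beta l' K' ζ' =>
            obtain ⟨s1, s2⟩ := hOK _ List.mem_cons_self
            exact beta_isCritical g H L P X Y loss hg hloss l' K' ζ' θ s1 s2 hθ
        | gamma l' K' h' lam' =>
            obtain ⟨s1, s2, s3, s4⟩ := hOK _ List.mem_cons_self
            exact gamma_isCritical g H L P X Y loss hg hloss l' K' h' lam' θ s1 s2 s3 s4 hθ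
/-- If `g` and the loss (in its second argument) are differentiable and
`θ` is a stationary point of the empirical risk of the original network, then the point
`θ_t` obtained by applying a sequence of steps `ξ^{(i)}` — each either a `β` embedding
with zero outgoing weights or a `γ` embedding with coefficients summing to one — to
pairwise distinct hidden layers `r_i ∈ {1, …, L-1}` is a stationary point of the
empirical risk of the enlarged network. -/
theorem mixed_steps_is_critical
    (g : ℝ → ℝ) (H : ℕ → ℕ) (L P : ℕ) (X Y : ℕ → ℕ → ℝ)
    (loss : (ℕ → ℝ) → (Fin (H L) → ℝ) → ℝ)
    (hg : Differentiable ℝ g)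
    (hloss : ∀ y : ℕ → ℝ,
      Differentiable ℝ (fun z : EuclideanSpace ℝ (Fin (H L)) => loss y z))
    (steps : List EmbStep) (hnd : (steps.map EmbStep.layer).Nodup)
    (hOK : ∀ st ∈ steps, EmbStep.OK H L st)
    (θ : NNParams) (hθ : IsCritical g H L P X Y loss θ)
    (θhat : NNParams) (hemb : θhat = applySteps g H steps θ) :
    IsCritical g (stepsH H steps) L P X Y loss θhat := by
  subst hemb
  exact steps_isCritical g L P X Y loss hg hloss steps H θ hnd hOK hθ
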